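/- arXiv:2406.08061 — 5 statements merged into one kernel-verified Lean document; each statement's English description precedes it below -/
import Mathlib

section
/- Let f : X → Y be a continuous map of topological spaces, y ∈ Y, and suppose given, for each n ∈ ℕ ∪ {0}, an open neighborhood O_n of y and a function φ_n : X → [0,1] such that: (a) O_0 = Y and O_{n+1} ⊆ O_n for all n; (b) the sequence osc_{φ_n}(f⁻¹(O_n)) converges to 0; (c) the series Σ_{n=0}^∞ sup_{x ∈ f⁻¹(O_{n+1})} |φ_{n+1}(x) − φ_n(x)| converges. Then the sequence (φ_n) converges pointwise on ⋂_{n} f⁻¹(O_n), and the function φ : X → [0,1] defined by φ(x) = φ_n(x) for x ∈ f⁻¹(O_n) \ f⁻¹(O_{n+1}) and φ(x) = lim_{n→∞} φ_n(x) for x ∈ ⋂_{n} f⁻¹(O_n) is f-continuous at y. -/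
/- Definitions from fiberwise general topology (Liseev, "Functional approach
to the normality of mappings"). -/

variable {X Y : Type*} [TopologicalSpace X] [TopologicalSpace Y]

/-- Oscillation of a function `φ` at a point `x`, computed within the subspace `S`:
the infimum over open neighborhoods `G` of `x` of `sup_{z ∈ G ∩ S} |φ x - φ z|`. -/
noncomputable def oscWithin (S : Set X) (φ : X → ℝ) (x : X) : ℝ :=
  sInf {r : ℝ | ∃ G : Set X, IsOpen G ∧ x ∈ G ∧ r = sSup ((fun z => |φ x - φ z|) '' (G ∩ S))}

/-- Oscillation of `φ` on a set `A`, within the subspace `S`: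
`sup_{x ∈ A} oscWithin S φ x` (equal to `0` for `A = ∅`, since `sSup ∅ = 0` in `ℝ`). -/
noncomputable def oscOnWithin (S : Set X) (φ : X → ℝ) (A : Set X) : ℝ :=
  sSup (oscWithin S φ '' A)

/-- Oscillation of `φ : X → ℝ` at a point `x ∈ X`. -/
noncomputable def osc (φ : X → ℝ) (x : X) : ℝ := oscWithin Set.univ φ x

/-- Oscillation of `φ : X → ℝ` on a set `A ⊆ X`. -/
noncomputable def oscOn (φ : X → ℝ) (A : Set X) : ℝ := oscOnWithin Set.univ φ A

/-- `A` is an open subset of the subspace `S`. -/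
def OpenIn (S A : Set X) : Prop := ∃ G : Set X, IsOpen G ∧ A = G ∩ S

/-- `A` is a closed subset of the subspace `S`. -/
def ClosedIn (S A : Set X) : Prop := ∃ C : Set X, IsClosed C ∧ A = C ∩ S

/-- Closure of `A ⊆ S` in the subspace `S`. -/
def clIn (S A : Set X) : Set X := closure A ∩ S

/-- Interior of `A ⊆ S` in the subspace `S`. -/
def intIn (S A : Set X) : Set X :=
  ⋃₀ {V : Set X | (∃ G : Set X, IsOpen G ∧ V = G ∩ S) ∧ V ⊆ A}

/-- `A` is an `F_σ`-subset of the subspace `S`. -/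
def FSigmaIn (S A : Set X) : Prop := ∃ C : ℕ → Set X, (∀ l, ClosedIn S (C l)) ∧ A = ⋃ l, C l

/-- A (bounded) function `φ : X → ℝ` is `f`-continuous at a point `y ∈ Y`:
for every `ε > 0` there is an open neighborhood `O` of `y` with `osc_φ(f⁻¹ O) < ε`. -/
def FContinuousAt (f : X → Y) (φ : X → ℝ) (y : Y) : Prop :=
  ∀ ε > (0 : ℝ), ∃ O : Set Y, IsOpen O ∧ y ∈ O ∧ oscOn φ (f ⁻¹' O) < ε

/-- A family of functions `φ n : X → ℝ` is `f`-equicontinuous at a point `y ∈ Y`. -/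
def FEquicontinuousAt (f : X → Y) (φ : ℕ → X → ℝ) (y : Y) : Prop :=
  ∀ ε > (0 : ℝ), ∃ O : Set Y, IsOpen O ∧ y ∈ O ∧ ∀ n, oscOn (φ n) (f ⁻¹' O) < ε

/-- `A` and `B` are separated by neighborhoods in the subspace `S`:
`A ∩ S` and `B ∩ S` have disjoint open neighborhoods in `S`. -/
def SeparatedIn (S A B : Set X) : Prop :=
  ∃ U V : Set X, OpenIn S U ∧ OpenIn S V ∧ A ∩ S ⊆ U ∧ B ∩ S ⊆ V ∧ U ∩ V = ∅

/-- Prenormality of the restriction `f_O : f⁻¹ O → O` of `f` over `O`: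
any two disjoint closed (in `f⁻¹ O`) sets `A`, `B` are `f_O`-separated by neighborhoods. -/
def PrenormalOn (f : X → Y) (O : Set Y) : Prop :=
  ∀ A B : Set X, ClosedIn (f ⁻¹' O) A → ClosedIn (f ⁻¹' O) B → A ∩ B = ∅ →
    ∀ y ∈ O, ∃ W : Set Y, IsOpen W ∧ y ∈ W ∧ W ⊆ O ∧ SeparatedIn (f ⁻¹' W) A B

/-- A mapping `f : X → Y` is prenormal if any two disjoint closed subsets of `X`
are `f`-separated by neighborhoods. -/
def PrenormalMap (f : X → Y) : Prop :=
  ∀ A B : Set X, IsClosed A → IsClosed B → A ∩ B = ∅ →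
    ∀ y : Y, ∃ W : Set Y, IsOpen W ∧ y ∈ W ∧ SeparatedIn (f ⁻¹' W) A B

/-- A mapping `f : X → Y` is normal if for every open `O ⊆ Y` the restriction
`f_O : f⁻¹ O → O` is prenormal. -/
def NormalMap (f : X → Y) : Prop := ∀ O : Set Y, IsOpen O → PrenormalOn f O

/-- σ-prenormality of the restriction `f_O : f⁻¹ O → O` of `f` over `O`. -/
def SigmaPrenormalOn (f : X → Y) (O : Set Y) : Prop :=
  ∀ T : ℕ → Set X, (∀ l, ClosedIn (f ⁻¹' O) (T l)) →
    ∀ F : Set X, ClosedIn (f ⁻¹' O) F → (⋃ l, T l) ∩ F = ∅ →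
      ∀ y ∈ O, ∃ W : Set Y, IsOpen W ∧ y ∈ W ∧ W ⊆ O ∧
        ∃ V : ℕ → Set X, (∀ l, OpenIn (f ⁻¹' W) (V l)) ∧
          (∀ l, T l ∩ f ⁻¹' W ⊆ V l) ∧
          (⋃ l, clIn (f ⁻¹' W) (V l)) ∩ F = ∅

/-- A mapping `f : X → Y` is σ-normal if for every open `O ⊆ Y` the restriction
`f_O : f⁻¹ O → O` is σ-prenormal. -/
def SigmaNormalMap (f : X → Y) : Prop := ∀ O : Set Y, IsOpen O → SigmaPrenormalOn f O

/-- The submapping `f|_{X₀} : X₀ → Y` is of type `F_σ`: every `y ∈ Y` has an open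
neighborhood `W` with `X₀ ∩ f⁻¹ W` an `F_σ`-subset of the subspace `f⁻¹ W`. -/
def FSigmaSubmap (f : X → Y) (X₀ : Set X) : Prop :=
  ∀ y : Y, ∃ W : Set Y, IsOpen W ∧ y ∈ W ∧ FSigmaIn (f ⁻¹' W) (X₀ ∩ f ⁻¹' W)

/-- The submapping `(f_O)|_{X₀} : X₀ → O` of the restriction `f_O : f⁻¹ O → O`
is of type `F_σ`. -/
def FSigmaSubmapOn (f : X → Y) (O : Set Y) (X₀ : Set X) : Prop :=
  ∀ y ∈ O, ∃ W : Set Y, IsOpen W ∧ y ∈ W ∧ W ⊆ O ∧ FSigmaIn (f ⁻¹' W) (X₀ ∩ f ⁻¹' W)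

/-- `U 0, …, U (k-1)` is a regular `k`-partition of the subspace `S`. -/
structure IsRegularPartition (S : Set X) (k : ℕ) (U : ℕ → Set X) : Prop where
  subset : ∀ m < k, U m ⊆ S
  disj : ∀ m < k, ∀ m' < k, m ≠ m' → U m ∩ U m' = ∅
  cover : (⋃ m ∈ Finset.range k, U m) = S
  closed : ∀ p < k, ClosedIn S (⋃ m ∈ Finset.range (p + 1), U m)
  sep : ∀ p, p + 3 ≤ k →
    (⋃ m ∈ Finset.range (p + 1), U m) ∩ clIn S (⋃ m ∈ Finset.Ico (p + 2) k, U m) = ∅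

/-- A consistent family of binary partitions of the mapping `f : X → Y` at `y ∈ Y`. -/
structure ConsistentBinaryPartitions (f : X → Y) (y : Y) (O : ℕ → Set Y)
    (U : ℕ → ℕ → Set X) : Prop where
  isOpen : ∀ n, IsOpen (O n)
  mem : ∀ n, y ∈ O n
  zero : O 0 = Set.univ
  mono : ∀ n, O (n + 1) ⊆ O n
  part : ∀ n, IsRegularPartition (f ⁻¹' O n) (2 ^ n) (U n)
  consistent : ∀ n, ∀ k < 2 ^ n,
    U (n + 1) (2 * k) ∪ U (n + 1) (2 * k + 1) = U n k ∩ f ⁻¹' O (n + 1)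

/-- A mapping `f : X → Y` is perfectly normal (Definition 5.1). -/
def PerfectlyNormalMap (f : X → Y) : Prop :=
  ∀ O : Set X, IsOpen O → ∀ y : Y, ∃ Oy : Set Y, IsOpen Oy ∧ y ∈ Oy ∧
    ∃ φ : ℕ → X → ℝ, (∀ l x, φ l x ∈ Set.Icc (0 : ℝ) 1) ∧ FEquicontinuousAt f φ y ∧
      O ∩ f ⁻¹' Oy = (⋃ l, φ l ⁻¹' {1} ∩ f ⁻¹' Oy) ∧
      ∀ l, f ⁻¹' Oy \ O ⊆ φ l ⁻¹' {0} ∩ f ⁻¹' Oy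

/-- The submapping `f|_U : U → Y` is `f`-functionally open. -/
def FFunctionallyOpen (f : X → Y) (U : Set X) : Prop :=
  ∀ y : Y, ∃ Oy : Set Y, IsOpen Oy ∧ y ∈ Oy ∧
    ∃ φ : X → ℝ, (∀ x, φ x ∈ Set.Icc (0 : ℝ) 1) ∧ FContinuousAt f φ y ∧
      U ∩ f ⁻¹' Oy = φ ⁻¹' Set.Ioc (0 : ℝ) 1 ∩ f ⁻¹' Oy

/-- The submapping `f|_F : F → Y` is `f`-functionally closed. -/
def FFunctionallyClosed (f : X → Y) (F : Set X) : Prop :=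
  ∀ y : Y, ∃ Oy : Set Y, IsOpen Oy ∧ y ∈ Oy ∧
    ∃ φ : X → ℝ, (∀ x, φ x ∈ Set.Icc (0 : ℝ) 1) ∧ FContinuousAt f φ y ∧
      F ∩ f ⁻¹' Oy = φ ⁻¹' {0} ∩ f ⁻¹' Oy

/-- A σ-normal mapping `f : X → Y` is co-σ-perfectly normal if every open submapping
is of type `F_σ`. -/
def CoSigmaPerfectlyNormalMap (f : X → Y) : Prop :=
  SigmaNormalMap f ∧ ∀ U : Set X, IsOpen U → FSigmaSubmap f U

/-- Lemma 2.2: gluing a sequence of functions along a decreasing sequence of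
neighborhoods of `y` produces an `f`-continuous at `y` function. -/
theorem fContinuousAt_of_glued {X Y : Type*} [TopologicalSpace X] [TopologicalSpace Y]
    (f : X → Y) (hf : Continuous f) (y : Y) (O : ℕ → Set Y) (φ : ℕ → X → ℝ)
    (hOopen : ∀ n, IsOpen (O n)) (hOmem : ∀ n, y ∈ O n)
    (hO0 : O 0 = Set.univ) (hOmono : ∀ n, O (n + 1) ⊆ O n)
    (hφ : ∀ n x, φ n x ∈ Set.Icc (0 : ℝ) 1)
    (hb : Filter.Tendsto (fun n => oscOn (φ n) (f ⁻¹' O n)) Filter.atTop (nhds 0))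
    (hc : Summable fun n => sSup ((fun x => |φ (n + 1) x - φ n x|) '' (f ⁻¹' O (n + 1)))) :
    (∀ x ∈ ⋂ n, f ⁻¹' O n, ∃ c : ℝ, Filter.Tendsto (fun n => φ n x) Filter.atTop (nhds c)) ∧
    ∀ Φ : X → ℝ,
      (∀ n, ∀ x ∈ f ⁻¹' O n \ f ⁻¹' O (n + 1), Φ x = φ n x) →
      (∀ x ∈ ⋂ n, f ⁻¹' O n, Filter.Tendsto (fun n => φ n x) Filter.atTop (nhds (Φ x))) →
      FContinuousAt f Φ y := by
  classical
  set d : ℕ → ℝ := fun n => sSup ((fun x => |φ (n + 1) x - φ n x|) '' (f ⁻¹' O (n + 1))) with hdDef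
  have hcd : Summable d := hc
  have hOanti : Antitone fun n => (f ⁻¹' O n : Set X) := by
    apply antitone_nat_of_succ_le
    intro n x hx
    exact hOmono n hx
  have hdnonneg : ∀ n, 0 ≤ d n := fun n =>
    Real.sSup_nonneg (by rintro r ⟨x, hx, rfl⟩; exact abs_nonneg _)
  have hdbdd : ∀ n, BddAbove ((fun x => |φ (n + 1) x - φ n x|) '' (f ⁻¹' O (n + 1))) := by
    intro n
    refine ⟨1, ?_⟩
    rintro r ⟨x, hx, rfl⟩
    have h1 := hφ (n + 1) x
    have h2 := hφ n x
    rw [abs_sub_le_iff]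
    constructor <;> [linarith [h1.1, h1.2, h2.1, h2.2]; linarith [h1.1, h1.2, h2.1, h2.2]]
  have hdle : ∀ n x, x ∈ f ⁻¹' O (n + 1) → |φ (n + 1) x - φ n x| ≤ d n := fun n x hx =>
    le_csSup (hdbdd n) ⟨x, hx, rfl⟩
  set T : ℕ → ℝ := fun m => ∑' k, d (k + m) with hTDef
  have hTnonneg : ∀ m, 0 ≤ T m := fun m => tsum_nonneg fun k => hdnonneg _
  have hTsummable : ∀ m, Summable fun k => d (k + m) := fun m =>
    (summable_nat_add_iff m).mpr hcd
  have hsum : ∀ m n, m ≤ n → ∀ x : X, (∀ k, k < n → x ∈ f ⁻¹' O (k + 1)) →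
      |φ n x - φ m x| ≤ T m := by
    intro m n hmn x hx
    have h1 : dist (φ m x) (φ n x) ≤ ∑ k ∈ Finset.Ico m n, d k := by
      refine dist_le_Ico_sum_of_dist_le (f := fun k => φ k x) hmn ?_
      intro k hk1 hk2
      rw [Real.dist_eq, abs_sub_comm]
      exact hdle k x (hx k hk2)
    have h2 : ∑ k ∈ Finset.Ico m n, d k ≤ T m := by
      rw [Finset.sum_Ico_eq_sum_range]
      have : ∀ j ∈ Finset.range (n - m), d (m + j) = (fun k => d (k + m)) j := by
        intro j _; simp [add_comm]
      rw [Finset.sum_congr rfl this]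
      exact Summable.sum_le_tsum _ (fun j _ => hdnonneg _) (hTsummable m)
    calc |φ n x - φ m x| = dist (φ m x) (φ n x) := by rw [Real.dist_eq, abs_sub_comm]
      _ ≤ _ := h1
      _ ≤ T m := h2
  -- part 1: pointwise convergence on the intersection
  have part1 : ∀ x ∈ ⋂ n, f ⁻¹' O n,
      ∃ c : ℝ, Filter.Tendsto (fun n => φ n x) Filter.atTop (nhds c) := by
    intro x hx
    have hxall : ∀ k, x ∈ f ⁻¹' O k := fun k => Set.mem_iInter.1 hx k
    have hcau : CauchySeq fun n => φ n x := by
      refine cauchySeq_of_dist_le_of_summable d ?_ hcd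
      intro n
      rw [Real.dist_eq, abs_sub_comm]
      exact hdle n x (hxall (n + 1))
    exact cauchySeq_tendsto_of_complete hcau
  refine ⟨part1, ?_⟩
  intro Φ hΦeq hΦlim
  -- Claim A
  have claimA : ∀ m, ∀ x ∈ f ⁻¹' O m, |Φ x - φ m x| ≤ T m := by
    intro m x hx
    by_cases hxin : x ∈ ⋂ n, f ⁻¹' O n
    · have hxall : ∀ k, x ∈ f ⁻¹' O k := fun k => Set.mem_iInter.1 hxin k
      have hlim : Filter.Tendsto (fun n => |φ n x - φ m x|) Filter.atTop
          (nhds |Φ x - φ m x|) := ((hΦlim x hxin).sub tendsto_const_nhds).abs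
      refine le_of_tendsto hlim ?_
      filter_upwards [Filter.eventually_ge_atTop m] with n hn
      exact hsum m n hn x (fun k _ => hxall (k + 1))
    · have hex : ∃ n, x ∉ f ⁻¹' O n := by
        by_contra h
        push_neg at h
        exact hxin (Set.mem_iInter.2 h)
      set n0 := Nat.find hex with hn0
      have hpn0 : x ∉ f ⁻¹' O n0 := Nat.find_spec hex
      have hn0pos : 0 < n0 := by
        rcases Nat.eq_zero_or_pos n0 with h0 | h0
        · exfalso; apply hpn0; rw [h0]; simp [Set.mem_preimage, hO0]
        · exact h0
      set n := n0 - 1 with hnd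
      have hnn0 : n + 1 = n0 := Nat.succ_pred_eq_of_pos hn0pos
      have hxn : x ∈ f ⁻¹' O n := by
        by_contra h
        have : n0 ≤ n := Nat.find_le h
        omega
      have hxn1 : x ∉ f ⁻¹' O (n + 1) := by rw [hnn0]; exact hpn0
      have hΦx : Φ x = φ n x := hΦeq n x ⟨hxn, hxn1⟩
      have hmn : m ≤ n := by
        by_contra h
        push_neg at h
        exact hxn1 (hOanti (by omega : n + 1 ≤ m) hx)
      rw [hΦx]
      exact hsum m n hmn x (fun k hk => hOanti (by omega : k + 1 ≤ n) hxn)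
  -- basic facts about oscWithin
  have hoscW_bddBelow : ∀ (ψ : X → ℝ) (x : X),
      BddBelow {r : ℝ | ∃ G : Set X, IsOpen G ∧ x ∈ G ∧
        r = sSup ((fun z => |ψ x - ψ z|) '' (G ∩ Set.univ))} := by
    intro ψ x
    refine ⟨0, ?_⟩
    rintro r ⟨G, _, _, rfl⟩
    exact Real.sSup_nonneg (by rintro r ⟨z, hz, rfl⟩; exact abs_nonneg _)
  have hoscW_le_one : ∀ (ψ : X → ℝ), (∀ z, ψ z ∈ Set.Icc (0 : ℝ) 1) →
      ∀ x : X, oscWithin Set.univ ψ x ≤ 1 := by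
    intro ψ hψ x
    have hmem : sSup ((fun z => |ψ x - ψ z|) '' (Set.univ ∩ Set.univ)) ∈
        {r : ℝ | ∃ G : Set X, IsOpen G ∧ x ∈ G ∧
          r = sSup ((fun z => |ψ x - ψ z|) '' (G ∩ Set.univ))} :=
      ⟨Set.univ, isOpen_univ, Set.mem_univ x, rfl⟩
    calc oscWithin Set.univ ψ x ≤ _ := csInf_le (hoscW_bddBelow ψ x) hmem
      _ ≤ 1 := by
        refine Real.sSup_le ?_ zero_le_one
        rintro r ⟨z, _, rfl⟩
        have h1 := hψ x; have h2 := hψ z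
        rw [abs_sub_le_iff]
        constructor <;> [linarith [h1.1, h1.2, h2.1, h2.2]; linarith [h1.1, h1.2, h2.1, h2.2]]
  -- main estimate
  intro ε hε
  have hev1 : ∀ᶠ m in Filter.atTop, oscOn (φ m) (f ⁻¹' O m) < ε / 4 :=
    hb.eventually_lt_const (by linarith)
  have hev2 : ∀ᶠ m in Filter.atTop, T m < ε / 4 :=
    (tendsto_sum_nat_add d).eventually_lt_const (by linarith)
  obtain ⟨m, hm1, hm2⟩ := (hev1.and hev2).exists
  refine ⟨O m, hOopen m, hOmem m, ?_⟩
  have hΦIcc : ∀ x, Φ x ∈ Set.Icc (0 : ℝ) 1 := by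
    intro x
    by_cases hxin : x ∈ ⋂ n, f ⁻¹' O n
    · have := hΦlim x hxin
      constructor
      · exact ge_of_tendsto this (Filter.Eventually.of_forall fun n => (hφ n x).1)
      · exact le_of_tendsto this (Filter.Eventually.of_forall fun n => (hφ n x).2)
    · have hex : ∃ n, x ∉ f ⁻¹' O n := by
        by_contra h
        push_neg at h
        exact hxin (Set.mem_iInter.2 h)
      set n0 := Nat.find hex with hn0
      have hpn0 : x ∉ f ⁻¹' O n0 := Nat.find_spec hex
      have hn0pos : 0 < n0 := by
        rcases Nat.eq_zero_or_pos n0 with h0 | h0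
        · exfalso; apply hpn0; rw [h0]; simp [Set.mem_preimage, hO0]
        · exact h0
      set n := n0 - 1 with hnd
      have hnn0 : n + 1 = n0 := Nat.succ_pred_eq_of_pos hn0pos
      have hxn : x ∈ f ⁻¹' O n := by
        by_contra h
        have : n0 ≤ n := Nat.find_le h
        omega
      have hxn1 : x ∉ f ⁻¹' O (n + 1) := by rw [hnn0]; exact hpn0
      rw [hΦeq n x ⟨hxn, hxn1⟩]
      exact hφ n x
  have key : ∀ x ∈ f ⁻¹' O m, oscWithin Set.univ Φ x ≤ 3 * (ε / 4) := by
    intro x hx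
    -- φ m has small oscillation at x
    have h1 : oscWithin Set.univ (φ m) x ≤ oscOn (φ m) (f ⁻¹' O m) := by
      refine le_csSup ?_ ⟨x, hx, rfl⟩
      exact ⟨1, by rintro r ⟨z, _, rfl⟩; exact hoscW_le_one (φ m) (hφ m) z⟩
    have h2 : oscWithin Set.univ (φ m) x < ε / 4 := lt_of_le_of_lt h1 hm1
    have hne : {r : ℝ | ∃ G : Set X, IsOpen G ∧ x ∈ G ∧
        r = sSup ((fun z => |φ m x - φ m z|) '' (G ∩ Set.univ))}.Nonempty :=
      ⟨_, Set.univ, isOpen_univ, Set.mem_univ x, rfl⟩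
    rw [oscWithin] at h2
    obtain ⟨r, ⟨G', hG'open, hxG', hrEq⟩, hrlt⟩ := exists_lt_of_csInf_lt hne h2
    have hrnonneg : 0 ≤ r := by
      rw [hrEq]
      exact Real.sSup_nonneg (by rintro s ⟨z, hz, rfl⟩; exact abs_nonneg _)
    have hrbound : ∀ z ∈ G', |φ m x - φ m z| ≤ r := by
      intro z hz
      rw [hrEq]
      refine le_csSup ⟨1, ?_⟩ ⟨z, ⟨hz, Set.mem_univ z⟩, rfl⟩
      rintro s ⟨w, _, rfl⟩
      have h1 := hφ m x; have h2 := hφ m w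
      rw [abs_sub_le_iff]
      constructor <;> [linarith [h1.1, h1.2, h2.1, h2.2]; linarith [h1.1, h1.2, h2.1, h2.2]]
    -- restrict to the preimage
    set G : Set X := G' ∩ f ⁻¹' O m with hGdef
    have hGopen : IsOpen G := hG'open.inter ((hOopen m).preimage hf)
    have hxG : x ∈ G := ⟨hxG', hx⟩
    have hGbound : ∀ z ∈ G, |Φ x - Φ z| ≤ 2 * T m + r := by
      intro z hz
      have e1 : |Φ x - φ m x| ≤ T m := claimA m x hx
      have e2 : |φ m x - φ m z| ≤ r := hrbound z hz.1
      have e3 : |Φ z - φ m z| ≤ T m := claimA m z hz.2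
      calc |Φ x - Φ z| = |(Φ x - φ m x) + (φ m x - φ m z) + (φ m z - Φ z)| := by ring_nf
        _ ≤ |Φ x - φ m x| + |φ m x - φ m z| + |φ m z - Φ z| := abs_add_three _ _ _
        _ ≤ T m + r + T m := by
            have e3' : |φ m z - Φ z| ≤ T m := by rw [abs_sub_comm]; exact e3
            exact add_le_add (add_le_add e1 e2) e3'
        _ = 2 * T m + r := by ring
    have hG_sSup : sSup ((fun z => |Φ x - Φ z|) '' (G ∩ Set.univ)) ≤ 2 * T m + r := by
      refine Real.sSup_le ?_ (by linarith [hTnonneg m])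
      rintro s ⟨z, hz, rfl⟩
      exact hGbound z hz.1
    have hoscΦ : oscWithin Set.univ Φ x ≤ 2 * T m + r :=
      le_trans (csInf_le (hoscW_bddBelow Φ x) ⟨G, hGopen, hxG, rfl⟩) hG_sSup
    linarith
  refine lt_of_le_of_lt (Real.sSup_le ?_ (by linarith)) (by linarith : 3 * (ε / 4) < ε)
  rintro s ⟨x, hx, rfl⟩
  exact key x hx
end

section
/- Let k ≥ 3 and let U⁰, …, U^{k−1} be a regular k-partition of a topological space X. Then ⋃_{m=0}^{k−2} int(Uᵐ ∪ U^{m+1}) = X. -/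
/- Definitions from fiberwise general topology (Liseev, "Functional approach
to the normality of mappings"). -/

variable {X Y : Type*} [TopologicalSpace X] [TopologicalSpace Y]

/-- Lemma 2.4: for a regular `k`-partition (`k ≥ 3`) of a space `X`,
`⋃_{m=0}^{k-2} int (U m ∪ U (m+1)) = X`. -/
theorem regularPartition_union_interior {X : Type*} [TopologicalSpace X]
    (k : ℕ) (hk : 3 ≤ k) (U : ℕ → Set X)
    (h : IsRegularPartition (Set.univ : Set X) k U) :
    (⋃ m ∈ Finset.range (k - 1), interior (U m ∪ U (m + 1))) = Set.univ := by
  apply Set.eq_univ_of_forall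
  intro x
  have hx : x ∈ ⋃ m ∈ Finset.range k, U m := by rw [h.cover]; trivial
  simp only [Set.mem_iUnion, Finset.mem_range] at hx
  obtain ⟨p, hp, hxp⟩ := hx
  set m := min p (k - 2) with hm
  have hmp : m ≤ p := min_le_left _ _
  have hmk2 : m ≤ k - 2 := min_le_right _ _
  have hmk : m + 1 < k := by omega
  have hmor : m = p ∨ m = k - 2 := min_choice p (k - 2)
  clear_value m
  clear hm
  set A := (⋃ j ∈ Finset.range m, U j) with hA
  set T := closure (⋃ j ∈ Finset.Ico (m + 2) k, U j) with hT
  have hAclosed : IsClosed A := by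
    rcases Nat.eq_zero_or_pos m with hm0 | hm0
    · simp [hA, hm0]
    · obtain ⟨C, hC, hEq⟩ := h.closed (m - 1) (by omega)
      rw [Set.inter_univ] at hEq
      have hm1 : m - 1 + 1 = m := by omega
      rw [hm1] at hEq
      rw [hA, hEq]; exact hC
  have hGopen : IsOpen (A ∪ T)ᶜ := (hAclosed.union isClosed_closure).isOpen_compl
  have hxG : x ∈ (A ∪ T)ᶜ := by
    intro hmem
    rcases hmem with hmem | hmem
    · simp only [hA, Set.mem_iUnion, Finset.mem_range] at hmem
      obtain ⟨j, hj, hxj⟩ := hmem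
      have := h.disj j (by omega) p hp (by omega)
      exact absurd (Set.mem_inter hxj hxp) (by rw [this]; exact fun h => h)
    · rcases Nat.lt_or_ge (m + 2) k with hlt | hge
      · have hmp' : m = p := by omega
        have hsep := h.sep m (by omega)
        have hxA : x ∈ (⋃ j ∈ Finset.range (m + 1), U j) := by
          simp only [Set.mem_iUnion, Finset.mem_range]
          exact ⟨p, by omega, hxp⟩
        have : x ∈ (⋃ j ∈ Finset.range (m + 1), U j) ∩ clIn Set.univ (⋃ j ∈ Finset.Ico (m + 2) k, U j) :=
          ⟨hxA, ⟨hmem, trivial⟩⟩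
        rw [hsep] at this; exact this
      · have : Finset.Ico (m + 2) k = ∅ := Finset.Ico_eq_empty (by omega)
        rw [hT, this] at hmem
        simp at hmem
  have hsub : (A ∪ T)ᶜ ⊆ U m ∪ U (m + 1) := by
    intro z hz
    have hz' : z ∈ ⋃ j ∈ Finset.range k, U j := by rw [h.cover]; trivial
    simp only [Set.mem_iUnion, Finset.mem_range] at hz'
    obtain ⟨q, hq, hzq⟩ := hz'
    simp only [Set.mem_compl_iff, Set.mem_union, not_or] at hz
    have hq1 : ¬ q < m := fun hlt => hz.1 (by
      simp only [hA, Set.mem_iUnion, Finset.mem_range]; exact ⟨q, hlt, hzq⟩)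
    have hq2 : ¬ (m + 2 ≤ q) := fun hge => hz.2 (subset_closure (by
      simp only [Set.mem_iUnion, Finset.mem_Ico]; exact ⟨q, ⟨hge, hq⟩, hzq⟩))
    have : q = m ∨ q = m + 1 := by omega
    rcases this with rfl | rfl
    · exact Or.inl hzq
    · exact Or.inr hzq
  simp only [Set.mem_iUnion, Finset.mem_range]
  refine ⟨m, by omega, ?_⟩
  exact mem_interior.mpr ⟨(A ∪ T)ᶜ, hsub, hGopen, hxG⟩
end

section
/- Let f : X → Y be a normal mapping. Then for every open O ⊆ Y, every pair of disjoint subsets F and T closed in the subspace f⁻¹(O), and every point y ∈ O, there exists a consistent family of binary partitions {O_n, {U_nᵏ : 0 ≤ k ≤ 2ⁿ−1} : n ≥ 0} of f at y such that for every n ≥ 1: (a) F ∩ f⁻¹(O_n) ⊆ U_n⁰ and T ∩ f⁻¹(O_n) ⊆ U_n^{2ⁿ−1}; (b) F ∩ cl_{f⁻¹(O_n)}(⋃_{k=1}^{2ⁿ−1} U_nᵏ) = ∅ and cl_{f⁻¹(O_n)}(⋃_{k=0}^{2ⁿ−2} U_nᵏ) ∩ T = ∅. -/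
/- Definitions from fiberwise general topology (Liseev, "Functional approach
to the normality of mappings"). -/

variable {X Y : Type*} [TopologicalSpace X] [TopologicalSpace Y]

set_option linter.unusedSectionVars false
section Helpers

variable {X Y : Type*} [TopologicalSpace X] [TopologicalSpace Y]

private lemma diff_union_diff' {A B C : Set X} (hBA : B ⊆ A) (hAC : A ⊆ C) :
    (A \ B) ∪ (C \ A) = C \ B := by
  ext x
  constructor
  · rintro (⟨h1, h2⟩ | ⟨h1, h2⟩)
    · exact ⟨hAC h1, h2⟩
    · exact ⟨h1, fun hB => h2 (hBA hB)⟩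
  · rintro ⟨h1, h2⟩
    by_cases hA : x ∈ A
    · exact Or.inl ⟨hA, h2⟩
    · exact Or.inr ⟨h1, hA⟩

private lemma closedIn_restrict {S S' A : Set X} (h : ClosedIn S A) (hS : S' ⊆ S) :
    ClosedIn S' (A ∩ S') := by
  obtain ⟨C, hC, rfl⟩ := h
  exact ⟨C, hC, by rw [Set.inter_assoc, Set.inter_eq_right.mpr hS]⟩

private def mkU (P : ℕ → Set X) : ℕ → Set X
  | 0 => P 0
  | p + 1 => P (p + 1) \ P p

private lemma mkU_zero (P : ℕ → Set X) : mkU P 0 = P 0 := rfl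

private lemma mkU_succ (P : ℕ → Set X) (p : ℕ) : mkU P (p + 1) = P (p + 1) \ P p := rfl

private lemma mkU_subset (P : ℕ → Set X) (p : ℕ) : mkU P p ⊆ P p := by
  cases p with
  | zero => exact subset_rfl
  | succ p => exact Set.diff_subset

private lemma mono_of_succ {P : ℕ → Set X} (hP : ∀ p, P p ⊆ P (p + 1)) :
    ∀ {p q : ℕ}, p ≤ q → P p ⊆ P q := by
  intro p q h
  induction h with
  | refl => exact subset_rfl
  | step h ih => exact ih.trans (hP _)

private lemma mkU_range {P : ℕ → Set X} (hP : ∀ p, P p ⊆ P (p + 1)) :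
    ∀ p, ⋃ m ∈ Finset.range (p + 1), mkU P m = P p := by
  intro p
  induction p with
  | zero => simp [mkU]
  | succ p ih =>
    rw [Finset.range_add_one, Finset.set_biUnion_insert, ih, mkU_succ]
    exact Set.diff_union_of_subset (hP p)

private lemma mkU_inter_P {P : ℕ → Set X} (hP : ∀ p, P p ⊆ P (p + 1))
    {p q : ℕ} (h : q < p) : mkU P p ∩ P q = ∅ := by
  obtain ⟨p, rfl⟩ : ∃ p', p = p' + 1 := ⟨p - 1, by omega⟩
  rw [mkU_succ]
  rw [Set.eq_empty_iff_forall_notMem]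
  rintro x ⟨⟨h1, h2⟩, h3⟩
  exact h2 (mono_of_succ hP (by omega : q ≤ p) h3)

private lemma mkU_disj {P : ℕ → Set X} (hP : ∀ p, P p ⊆ P (p + 1))
    {p q : ℕ} (h : p ≠ q) : mkU P p ∩ mkU P q = ∅ := by
  rcases Nat.lt_or_ge p q with hlt | hge
  · rw [Set.eq_empty_iff_forall_notMem]
    rintro x ⟨h1, h2⟩
    have := mkU_inter_P hP hlt
    rw [Set.eq_empty_iff_forall_notMem] at this
    exact this x ⟨h2, mkU_subset P p h1⟩
  · have hlt : q < p := by omega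
    rw [Set.eq_empty_iff_forall_notMem]
    rintro x ⟨h1, h2⟩
    have := mkU_inter_P hP hlt
    rw [Set.eq_empty_iff_forall_notMem] at this
    exact this x ⟨h1, mkU_subset P q h2⟩

private lemma mkU_Ico {P : ℕ → Set X} (hP : ∀ p, P p ⊆ P (p + 1)) :
    ∀ p q, p ≤ q → ⋃ m ∈ Finset.Ico (p + 1) (q + 1), mkU P m = P q \ P p := by
  intro p q h
  induction q, h using Nat.le_induction with
  | base => simp
  | succ q hpq ih =>
    rw [Nat.Ico_succ_right_eq_insert_Ico (by omega), Finset.set_biUnion_insert, ih,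
      mkU_succ, Set.union_comm, diff_union_diff' (mono_of_succ hP hpq) (hP q)]

private lemma interp (f : X → Y) (hnorm : NormalMap f) (y : Y)
    (W : Set Y) (hWo : IsOpen W) (hyW : y ∈ W) (A B : Set X)
    (hA : ClosedIn (f ⁻¹' W) A) (hB : ClosedIn (f ⁻¹' W) B) (hAB : A ∩ B = ∅) :
    ∃ (W' : Set Y) (C : Set X), IsOpen W' ∧ y ∈ W' ∧ W' ⊆ W ∧ C ⊆ f ⁻¹' W' ∧
      ClosedIn (f ⁻¹' W') C ∧ A ∩ f ⁻¹' W' ⊆ C ∧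
      A ∩ f ⁻¹' W' ∩ closure (f ⁻¹' W' \ C) = ∅ ∧ C ∩ B = ∅ := by
  obtain ⟨W', hW'o, hyW', hW'W, U, V, hU, hV, hAU, hBV, hUV⟩ :=
    hnorm W hWo A B hA hB hAB y hyW
  obtain ⟨G, hG, rfl⟩ := hU
  obtain ⟨H, hH, rfl⟩ := hV
  refine ⟨W', closure (G ∩ f ⁻¹' W') ∩ f ⁻¹' W', hW'o, hyW', hW'W,
    Set.inter_subset_right, ⟨_, isClosed_closure, rfl⟩, ?_, ?_, ?_⟩
  · intro x hx; exact ⟨subset_closure (hAU hx), hx.2⟩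
  · rw [Set.eq_empty_iff_forall_notMem]
    rintro x ⟨⟨hxA, hxW⟩, hxcl⟩
    have hxU : x ∈ G ∩ f ⁻¹' W' := hAU ⟨hxA, hxW⟩
    obtain ⟨z, hzG, hzW', hzC⟩ := mem_closure_iff.mp hxcl G hG hxU.1
    exact hzC ⟨subset_closure ⟨hzG, hzW'⟩, hzW'⟩
  · rw [Set.eq_empty_iff_forall_notMem]
    rintro x ⟨⟨hxcl, hxW⟩, hxB⟩
    have hxV : x ∈ H ∩ f ⁻¹' W' := hBV ⟨hxB, hxW⟩
    obtain ⟨z, hzH, hzG, hzW'⟩ := mem_closure_iff.mp hxcl H hH hxV.1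
    have hz : z ∈ (G ∩ f ⁻¹' W') ∩ (H ∩ f ⁻¹' W') := ⟨⟨hzG, hzW'⟩, ⟨hzH, hzW'⟩⟩
    rw [hUV] at hz
    exact hz

private structure ChainInv (f : X → Y) (O : Set Y) (F T : Set X) (y : Y)
    (n : ℕ) (W : Set Y) (D : ℕ → Set X) : Prop where
  opn : IsOpen W
  mem : y ∈ W
  subO : W ⊆ O
  Dsub : ∀ k, k + 2 ≤ 2 ^ n → D k ⊆ f ⁻¹' W
  Dclosed : ∀ k, k + 2 ≤ 2 ^ n → ClosedIn (f ⁻¹' W) (D k)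
  Dmono : ∀ k, k + 3 ≤ 2 ^ n → D k ⊆ D (k + 1)
  Dchain : ∀ k, k + 3 ≤ 2 ^ n → D k ∩ closure (f ⁻¹' W \ D (k + 1)) = ∅
  sepF : F ∩ f ⁻¹' W ∩ closure (f ⁻¹' W \ D 0) = ∅
  sepT : ∀ k, k + 2 ≤ 2 ^ n → T ∩ D k = ∅

private lemma chainBase (f : X → Y) (hnorm : NormalMap f) (O : Set Y) (hO : IsOpen O)
    (F T : Set X) (hFc : ClosedIn (f ⁻¹' O) F) (hTc : ClosedIn (f ⁻¹' O) T)
    (hFT : F ∩ T = ∅) (y : Y) (hy : y ∈ O) :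
    ∃ (W : Set Y) (D : ℕ → Set X), ChainInv f O F T y 1 W D := by
  obtain ⟨W', C, h1, h2, h3, h4, h5, h6, h7, h8⟩ :=
    interp f hnorm y O hO hy F T hFc hTc hFT
  exact ⟨W', fun _ => C,
    { opn := h1, mem := h2, subO := h3,
      Dsub := fun k _ => h4, Dclosed := fun k _ => h5,
      Dmono := fun k hk => absurd hk (by norm_num),
      Dchain := fun k hk => absurd hk (by norm_num),
      sepF := h7,
      sepT := fun k _ => by rw [Set.inter_comm]; exact h8 }⟩

end Helpers

section StepSec
set_option linter.unusedSectionVars false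
set_option maxHeartbeats 1000000

variable {X Y : Type*} [TopologicalSpace X] [TopologicalSpace Y]

private lemma chainStep (f : X → Y) (hnorm : NormalMap f) (O : Set Y)
    (F T : Set X) (hFc : ClosedIn (f ⁻¹' O) F) (hTc : ClosedIn (f ⁻¹' O) T) (y : Y)
    (n : ℕ) (hn : 1 ≤ n) (W : Set Y) (D : ℕ → Set X)
    (h : ChainInv f O F T y n W D) :
    ∃ (W' : Set Y) (D' : ℕ → Set X), ChainInv f O F T y (n + 1) W' D' ∧ W' ⊆ W ∧
      ∀ k, k + 2 ≤ 2 ^ n → D' (2 * k + 1) = D k ∩ f ⁻¹' W' := by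
  classical
  have hm2 : 2 ≤ 2 ^ n := by
    calc 2 = 2 ^ 1 := by norm_num
    _ ≤ 2 ^ n := Nat.pow_le_pow_right (by norm_num) hn
  have hpow : 2 ^ (n + 1) = 2 * 2 ^ n := by rw [pow_succ]; ring
  have hWO : f ⁻¹' W ⊆ f ⁻¹' O := fun x hx => h.subO hx
  set A : ℕ → Set X := fun k => if k = 0 then F ∩ f ⁻¹' W else D (k - 1) with hA
  set B : ℕ → Set X := fun k =>
    if k + 2 ≤ 2 ^ n then closure (f ⁻¹' W \ D k) ∩ f ⁻¹' W else T ∩ f ⁻¹' W with hB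
  have key : ∀ k, ∃ (W' : Set Y) (C : Set X), k < 2 ^ n →
      (IsOpen W' ∧ y ∈ W' ∧ W' ⊆ W ∧ C ⊆ f ⁻¹' W' ∧ ClosedIn (f ⁻¹' W') C ∧
       A k ∩ f ⁻¹' W' ⊆ C ∧ A k ∩ f ⁻¹' W' ∩ closure (f ⁻¹' W' \ C) = ∅ ∧
       C ∩ B k = ∅) := by
    intro k
    by_cases hk : k < 2 ^ n
    · have hAk : ClosedIn (f ⁻¹' W) (A k) := by
        rcases k with _ | j
        · simp only [hA, if_pos rfl]
          exact closedIn_restrict hFc hWO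
        · simp only [hA, if_neg (Nat.succ_ne_zero j), Nat.succ_sub_one]
          exact h.Dclosed j (by omega)
      have hBk : ClosedIn (f ⁻¹' W) (B k) := by
        by_cases hk2 : k + 2 ≤ 2 ^ n
        · simp only [hB, if_pos hk2]
          exact ⟨closure (f ⁻¹' W \ D k), isClosed_closure, rfl⟩
        · simp only [hB, if_neg hk2]
          exact closedIn_restrict hTc hWO
      have hABk : A k ∩ B k = ∅ := by
        rcases k with _ | j
        · simp only [hA, hB, if_pos rfl, if_pos (by omega : 0 + 2 ≤ 2 ^ n)]
          rw [Set.eq_empty_iff_forall_notMem]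
          rintro x ⟨⟨h1, h2⟩, h3, h4⟩
          have hx : x ∈ F ∩ f ⁻¹' W ∩ closure (f ⁻¹' W \ D 0) := ⟨⟨h1, h2⟩, h3⟩
          rw [h.sepF] at hx
          exact hx
        · simp only [hA, if_neg (Nat.succ_ne_zero j), Nat.succ_sub_one]
          by_cases hk2 : j + 1 + 2 ≤ 2 ^ n
          · simp only [hB, if_pos hk2]
            rw [Set.eq_empty_iff_forall_notMem]
            rintro x ⟨h1, h2, h3⟩
            have hx : x ∈ D j ∩ closure (f ⁻¹' W \ D (j + 1)) := ⟨h1, h2⟩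
            rw [h.Dchain j (by omega)] at hx
            exact hx
          · simp only [hB, if_neg hk2]
            rw [Set.eq_empty_iff_forall_notMem]
            rintro x ⟨h1, h2, h3⟩
            have hx : x ∈ T ∩ D j := ⟨h2, h1⟩
            rw [h.sepT j (by omega)] at hx
            exact hx
      obtain ⟨W', C, p1, p2, p3, p4, p5, p6, p7, p8⟩ :=
        interp f hnorm y W h.opn h.mem (A k) (B k) hAk hBk hABk
      exact ⟨W', C, fun _ => ⟨p1, p2, p3, p4, p5, p6, p7, p8⟩⟩
    · exact ⟨W, ∅, fun h' => absurd h' hk⟩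
  choose Wk Ck hk using key
  set W' : Set Y := W ∩ ⋂ k ∈ Finset.range (2 ^ n), Wk k with hW'
  have hW'W : W' ⊆ W := Set.inter_subset_left
  have hW'k : ∀ k, k < 2 ^ n → W' ⊆ Wk k := by
    intro k hkm x hx
    exact Set.mem_iInter₂.mp hx.2 k (Finset.mem_range.mpr hkm)
  have hW'o : IsOpen W' := by
    refine h.opn.inter (isOpen_biInter_finset fun k hkm => ?_)
    exact (hk k (Finset.mem_range.mp hkm)).1
  have hyW' : y ∈ W' := by
    refine ⟨h.mem, Set.mem_iInter₂.mpr fun k hkm => ?_⟩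
    exact (hk k (Finset.mem_range.mp hkm)).2.1
  set D' : ℕ → Set X := fun p => (if p % 2 = 0 then Ck (p / 2) else D (p / 2)) ∩ f ⁻¹' W'
    with hD'
  have e1 : ∀ k, D' (2 * k) = Ck k ∩ f ⁻¹' W' := by
    intro k
    simp only [hD']
    rw [if_pos (by omega : 2 * k % 2 = 0), (by omega : 2 * k / 2 = k)]
  have e2 : ∀ k, D' (2 * k + 1) = D k ∩ f ⁻¹' W' := by
    intro k
    simp only [hD']
    rw [if_neg (by omega : ¬ (2 * k + 1) % 2 = 0), (by omega : (2 * k + 1) / 2 = k)]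
  -- C_k ⊆ D k whenever k is not the last index
  have hCD : ∀ k, k + 2 ≤ 2 ^ n → Ck k ⊆ D k := by
    intro k hk2 x hxC
    have hkm : k < 2 ^ n := by omega
    obtain ⟨q1, q2, q3, q4, q5, q6, q7, q8⟩ := hk k hkm
    have hxW : x ∈ f ⁻¹' W := q3 (q4 hxC)
    by_contra hxD
    have hxB : x ∈ B k := by
      simp only [hB, if_pos hk2]
      exact ⟨subset_closure ⟨hxW, hxD⟩, hxW⟩
    have : x ∈ Ck k ∩ B k := ⟨hxC, hxB⟩
    rw [q8] at this
    exact this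
  refine ⟨W', D', ?_, hW'W, fun k _ => e2 k⟩
  have hsubW' : ∀ k, k < 2 ^ n → f ⁻¹' W' ⊆ f ⁻¹' (Wk k) := by
    intro k hkm x hx
    exact hW'k k hkm hx
  have hsubWW : f ⁻¹' W' ⊆ f ⁻¹' W := fun x hx => hW'W hx
  refine
    { opn := hW'o, mem := hyW', subO := hW'W.trans h.subO,
      Dsub := fun p _ => Set.inter_subset_right,
      Dclosed := ?_, Dmono := ?_, Dchain := ?_, sepF := ?_, sepT := ?_ }
  · -- Dclosed
    intro p hp
    obtain ⟨k, rfl | rfl⟩ := Nat.even_or_odd' p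
    · have hkm : k < 2 ^ n := by omega
      rw [e1]
      exact closedIn_restrict (hk k hkm).2.2.2.2.1 (hsubW' k hkm)
    · rw [e2]
      exact closedIn_restrict (h.Dclosed k (by omega)) hsubWW
  · -- Dmono
    intro p hp
    obtain ⟨k, rfl | rfl⟩ := Nat.even_or_odd' p
    · rw [e1, show 2 * k + 1 = 2 * k + 1 from rfl, e2]
      rintro x ⟨h1, h2⟩
      exact ⟨hCD k (by omega) h1, h2⟩
    · rw [e2, show 2 * k + 1 + 1 = 2 * (k + 1) by ring, e1]
      have hk1m : k + 1 < 2 ^ n := by omega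
      obtain ⟨q1, q2, q3, q4, q5, q6, q7, q8⟩ := hk (k + 1) hk1m
      rintro x ⟨h1, h2⟩
      refine ⟨q6 ⟨?_, hsubW' (k + 1) hk1m h2⟩, h2⟩
      simp only [hA, if_neg (Nat.succ_ne_zero k), Nat.succ_sub_one]
      exact h1
  · -- Dchain
    intro p hp
    obtain ⟨k, rfl | rfl⟩ := Nat.even_or_odd' p
    · rw [e1, show 2 * k + 1 = 2 * k + 1 from rfl, e2]
      have hk2 : k + 2 ≤ 2 ^ n := by omega
      have hkm : k < 2 ^ n := by omega
      obtain ⟨q1, q2, q3, q4, q5, q6, q7, q8⟩ := hk k hkm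
      rw [Set.eq_empty_iff_forall_notMem]
      rintro x ⟨⟨hxC, hxW'⟩, hxcl⟩
      have hsub : f ⁻¹' W' \ (D k ∩ f ⁻¹' W') ⊆ f ⁻¹' W \ D k := by
        rintro z ⟨hz1, hz2⟩
        exact ⟨hsubWW hz1, fun hzD => hz2 ⟨hzD, hz1⟩⟩
      have hxB : x ∈ B k := by
        simp only [hB, if_pos hk2]
        exact ⟨closure_mono hsub hxcl, hsubWW hxW'⟩
      have : x ∈ Ck k ∩ B k := ⟨hxC, hxB⟩
      rw [q8] at this
      exact this
    · rw [e2, show 2 * k + 1 + 1 = 2 * (k + 1) by ring, e1]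
      have hk1m : k + 1 < 2 ^ n := by omega
      obtain ⟨q1, q2, q3, q4, q5, q6, q7, q8⟩ := hk (k + 1) hk1m
      rw [Set.eq_empty_iff_forall_notMem]
      rintro x ⟨⟨hxD, hxW'⟩, hxcl⟩
      have hsub : f ⁻¹' W' \ (Ck (k + 1) ∩ f ⁻¹' W') ⊆ f ⁻¹' (Wk (k + 1)) \ Ck (k + 1) := by
        rintro z ⟨hz1, hz2⟩
        exact ⟨hsubW' (k + 1) hk1m hz1, fun hzC => hz2 ⟨hzC, hz1⟩⟩
      have hxA : x ∈ A (k + 1) := by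
        simp only [hA, if_neg (Nat.succ_ne_zero k), Nat.succ_sub_one]
        exact hxD
      have : x ∈ A (k + 1) ∩ f ⁻¹' (Wk (k + 1)) ∩ closure (f ⁻¹' (Wk (k + 1)) \ Ck (k + 1)) :=
        ⟨⟨hxA, hsubW' (k + 1) hk1m hxW'⟩, closure_mono hsub hxcl⟩
      rw [q7] at this
      exact this
  · -- sepF
    have h0m : 0 < 2 ^ n := by omega
    obtain ⟨q1, q2, q3, q4, q5, q6, q7, q8⟩ := hk 0 h0m
    have e10 : D' 0 = Ck 0 ∩ f ⁻¹' W' := by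
      have := e1 0; simpa using this
    rw [e10, Set.eq_empty_iff_forall_notMem]
    rintro x ⟨⟨hxF, hxW'⟩, hxcl⟩
    have hsub : f ⁻¹' W' \ (Ck 0 ∩ f ⁻¹' W') ⊆ f ⁻¹' (Wk 0) \ Ck 0 := by
      rintro z ⟨hz1, hz2⟩
      exact ⟨hsubW' 0 h0m hz1, fun hzC => hz2 ⟨hzC, hz1⟩⟩
    have hxA : x ∈ A 0 := by
      simp only [hA, if_pos rfl]
      exact ⟨hxF, hsubWW hxW'⟩
    have : x ∈ A 0 ∩ f ⁻¹' (Wk 0) ∩ closure (f ⁻¹' (Wk 0) \ Ck 0) :=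
      ⟨⟨hxA, hsubW' 0 h0m hxW'⟩, closure_mono hsub hxcl⟩
    rw [q7] at this
    exact this
  · -- sepT
    intro p hp
    obtain ⟨k, rfl | rfl⟩ := Nat.even_or_odd' p
    · rw [e1]
      have hkm : k < 2 ^ n := by omega
      obtain ⟨q1, q2, q3, q4, q5, q6, q7, q8⟩ := hk k hkm
      by_cases hk2 : k + 2 ≤ 2 ^ n
      · rw [Set.eq_empty_iff_forall_notMem]
        rintro x ⟨hxT, hxC, hxW'⟩
        have : x ∈ T ∩ D k := ⟨hxT, hCD k hk2 hxC⟩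
        rw [h.sepT k hk2] at this
        exact this
      · rw [Set.eq_empty_iff_forall_notMem]
        rintro x ⟨hxT, hxC, hxW'⟩
        have hxB : x ∈ B k := by
          simp only [hB, if_neg hk2]
          exact ⟨hxT, hsubWW hxW'⟩
        have : x ∈ Ck k ∩ B k := ⟨hxC, hxB⟩
        rw [q8] at this
        exact this
    · rw [e2]
      rw [Set.eq_empty_iff_forall_notMem]
      rintro x ⟨hxT, hxD, hxW'⟩
      have : x ∈ T ∩ D k := ⟨hxT, hxD⟩
      rw [h.sepT k (by omega)] at this
      exact this

end StepSec

set_option maxHeartbeats 2000000 in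
/-- Lemma 3.3, generalized small Urysohn lemma: for a normal mapping `f`,
disjoint closed (in `f⁻¹ O`) sets `F`, `T` and `y ∈ O`, there is a consistent family of binary
partitions of `f` at `y` separating `F` and `T` as in (a), (b). -/
theorem normalMap_consistentBinaryPartitions {X Y : Type*} [TopologicalSpace X]
    [TopologicalSpace Y] (f : X → Y) (hf : Continuous f) (hnorm : NormalMap f)
    (O : Set Y) (hO : IsOpen O) (F T : Set X)
    (hF : ClosedIn (f ⁻¹' O) F) (hT : ClosedIn (f ⁻¹' O) T) (hFT : F ∩ T = ∅)
    (y : Y) (hy : y ∈ O) :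
    ∃ (O' : ℕ → Set Y) (U : ℕ → ℕ → Set X),
      ConsistentBinaryPartitions f y O' U ∧
      ∀ n, 1 ≤ n →
        (F ∩ f ⁻¹' O' n ⊆ U n 0) ∧
        (T ∩ f ⁻¹' O' n ⊆ U n (2 ^ n - 1)) ∧
        F ∩ clIn (f ⁻¹' O' n) (⋃ k ∈ Finset.Ico 1 (2 ^ n), U n k) = ∅ ∧
        clIn (f ⁻¹' O' n) (⋃ k ∈ Finset.range (2 ^ n - 1), U n k) ∩ T = ∅ := by
  classical
  obtain ⟨W0, D0, hInv0⟩ := chainBase f hnorm O hO F T hF hT hFT y hy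
  have step' : ∀ (n : ℕ) (p : Set Y × (ℕ → Set X)),
      ∃ q : Set Y × (ℕ → Set X),
        ChainInv f O F T y (n + 1) p.1 p.2 →
          ChainInv f O F T y (n + 2) q.1 q.2 ∧ q.1 ⊆ p.1 ∧
          ∀ k, k + 2 ≤ 2 ^ (n + 1) → q.2 (2 * k + 1) = p.2 k ∩ f ⁻¹' q.1 := by
    intro n p
    by_cases hp : ChainInv f O F T y (n + 1) p.1 p.2
    · obtain ⟨W', D', h1, h2, h3⟩ :=
        chainStep f hnorm O F T hF hT y (n + 1) (by omega) p.1 p.2 hp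
      exact ⟨(W', D'), fun _ => ⟨h1, h2, h3⟩⟩
    · exact ⟨p, fun hq => absurd hq hp⟩
  choose G hG using step'
  set seq : ℕ → Set Y × (ℕ → Set X) :=
    fun n => Nat.rec (motive := fun _ => Set Y × (ℕ → Set X)) (W0, D0) (fun n p => G n p) n
    with hseq
  have hseqsucc : ∀ n, seq (n + 1) = G n (seq n) := fun n => rfl
  have hInv : ∀ n, ChainInv f O F T y (n + 1) (seq n).1 (seq n).2 := by
    intro n
    induction n with
    | zero => exact hInv0
    | succ n ih => rw [hseqsucc]; exact (hG n (seq n) ih).1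
  have hseqmono : ∀ n, (seq (n + 1)).1 ⊆ (seq n).1 := by
    intro n; rw [hseqsucc]; exact (hG n (seq n) (hInv n)).2.1
  have hseqcons : ∀ n k, k + 2 ≤ 2 ^ (n + 1) →
      (seq (n + 1)).2 (2 * k + 1) = (seq n).2 k ∩ f ⁻¹' (seq (n + 1)).1 := by
    intro n; rw [hseqsucc]; exact (hG n (seq n) (hInv n)).2.2
  -- the neighborhoods
  set O' : ℕ → Set Y := fun n => Nat.casesOn n Set.univ (fun m => (seq m).1) with hO'
  have hO'zero : O' 0 = Set.univ := rfl
  have hO'succ : ∀ m, O' (m + 1) = (seq m).1 := fun m => rfl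
  have hO'open : ∀ n, IsOpen (O' n) := by
    intro n; cases n with
    | zero => exact isOpen_univ
    | succ m => exact (hInv m).opn
  have hO'mem : ∀ n, y ∈ O' n := by
    intro n; cases n with
    | zero => trivial
    | succ m => exact (hInv m).mem
  have hO'mono : ∀ n, O' (n + 1) ⊆ O' n := by
    intro n; cases n with
    | zero => exact Set.subset_univ _
    | succ m => exact hseqmono m
  -- the prefix chains
  set Pre : ℕ → ℕ → Set X := fun n p =>
    Nat.casesOn n (f ⁻¹' Set.univ)
      (fun m => if p + 1 < 2 ^ (m + 1) then (seq m).2 p else f ⁻¹' (seq m).1)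
    with hPre
  have hPre0 : ∀ p, Pre 0 p = f ⁻¹' (O' 0) := fun p => rfl
  have hPreS : ∀ m p, Pre (m + 1) p =
      if p + 1 < 2 ^ (m + 1) then (seq m).2 p else f ⁻¹' (O' (m + 1)) := fun m p => rfl
  have hPtop : ∀ n p, 2 ^ n ≤ p + 1 → Pre n p = f ⁻¹' (O' n) := by
    intro n p hp
    cases n with
    | zero => exact hPre0 p
    | succ m => rw [hPreS, if_neg (by omega)]
  have hPD : ∀ m p, p + 1 < 2 ^ (m + 1) → Pre (m + 1) p = (seq m).2 p := by
    intro m p hp; rw [hPreS, if_pos hp]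
  have hPsub : ∀ n p, Pre n p ⊆ f ⁻¹' (O' n) := by
    intro n p
    cases n with
    | zero => exact subset_rfl
    | succ m =>
      by_cases hp : p + 1 < 2 ^ (m + 1)
      · rw [hPD m p hp]
        exact (hInv m).Dsub p (by omega)
      · rw [hPtop (m + 1) p (by omega)]
  have hPmono : ∀ n p, Pre n p ⊆ Pre n (p + 1) := by
    intro n p
    cases n with
    | zero => exact subset_rfl
    | succ m =>
      by_cases h2 : p + 1 + 1 < 2 ^ (m + 1)
      · rw [hPD m p (by omega), hPD m (p + 1) h2]
        exact (hInv m).Dmono p (by omega)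
      · rw [hPtop (m + 1) (p + 1) (by omega)]
        exact hPsub (m + 1) p
  have hPmono' : ∀ n, Monotone (Pre n) := fun n => monotone_nat_of_le_succ (hPmono n)
  have hPclosed : ∀ n p, ClosedIn (f ⁻¹' (O' n)) (Pre n p) := by
    intro n p
    cases n with
    | zero => exact ⟨Set.univ, isClosed_univ, (Set.univ_inter _).symm⟩
    | succ m =>
      by_cases hp : p + 1 < 2 ^ (m + 1)
      · rw [hPD m p hp]
        exact (hInv m).Dclosed p (by omega)
      · rw [hPtop (m + 1) p (by omega)]
        exact ⟨Set.univ, isClosed_univ, (Set.univ_inter _).symm⟩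
  have hPchain : ∀ n p, p + 3 ≤ 2 ^ n →
      Pre n p ∩ closure (f ⁻¹' (O' n) \ Pre n (p + 1)) = ∅ := by
    intro n p hp
    cases n with
    | zero => exact absurd hp (by norm_num)
    | succ m =>
      rw [hPD m p (by omega), hPD m (p + 1) (by omega)]
      exact (hInv m).Dchain p hp
  have hPreCons : ∀ n k, k < 2 ^ n →
      Pre (n + 1) (2 * k + 1) = Pre n k ∩ f ⁻¹' (O' (n + 1)) := by
    intro n k hkm
    by_cases hk1 : k + 1 < 2 ^ n
    · cases n with
      | zero => exact absurd hk1 (by norm_num)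
      | succ m =>
        have hpow : 2 ^ (m + 1 + 1) = 2 * 2 ^ (m + 1) := by rw [pow_succ]; ring
        rw [hPD (m + 1) (2 * k + 1) (by omega), hPD m k (by omega), hO'succ (m + 1)]
        exact hseqcons m k (by omega)
    · have hpow : 2 ^ (n + 1) = 2 * 2 ^ n := by rw [pow_succ]; ring
      rw [hPtop (n + 1) (2 * k + 1) (by omega), hPtop n k (by omega)]
      rw [Set.inter_eq_right.mpr]
      intro x hx
      exact hO'mono n hx
  refine ⟨O', fun n => mkU (Pre n), ⟨hO'open, hO'mem, hO'zero, hO'mono, ?_, ?_⟩, ?_⟩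
  · -- regular partitions
    intro n
    have hqpow : 1 ≤ 2 ^ n := Nat.one_le_two_pow
    obtain ⟨q, hq⟩ : ∃ q, 2 ^ n = q + 1 := ⟨2 ^ n - 1, by omega⟩
    refine
      { subset := fun m _ => (mkU_subset (Pre n) m).trans (hPsub n m),
        disj := fun m _ m' _ hne => mkU_disj (hPmono n) hne,
        cover := ?_, closed := ?_, sep := ?_ }
    · rw [hq, mkU_range (hPmono n), hPtop n q (by omega)]
    · intro p hp
      rw [mkU_range (hPmono n)]
      exact hPclosed n p
    · intro p hp
      rw [mkU_range (hPmono n), hq,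
        show p + 2 = (p + 1) + 1 from rfl, mkU_Ico (hPmono n) (p + 1) q (by omega),
        hPtop n q (by omega)]
      rw [Set.eq_empty_iff_forall_notMem]
      rintro x ⟨hx1, hx2, hx3⟩
      have : x ∈ Pre n p ∩ closure (f ⁻¹' (O' n) \ Pre n (p + 1)) := ⟨hx1, hx2⟩
      rw [hPchain n p hp] at this
      exact this
  · -- consistency
    intro n k hkm
    rcases k with _ | j
    · have e0 : mkU (Pre (n + 1)) 0 ∪ mkU (Pre (n + 1)) 1 = Pre (n + 1) 1 := by
        rw [mkU_zero, mkU_succ]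
        exact Set.union_diff_cancel (hPmono (n + 1) 0)
      have h1 : (2 : ℕ) * 0 = 0 := rfl
      have h2 : (2 : ℕ) * 0 + 1 = 1 := rfl
      rw [h1, h2, e0, hPreCons n 0 hkm, mkU_zero]
    · have hj : j < 2 ^ n := by omega
      have ha : 2 * (j + 1) = (2 * j + 1) + 1 := by ring
      have hb : 2 * (j + 1) + 1 = ((2 * j + 1) + 1) + 1 := by ring
      rw [ha, mkU_succ, mkU_succ,
        diff_union_diff' (hPmono (n + 1) (2 * j + 1)) (hPmono (n + 1) ((2 * j + 1) + 1)),
        ← hb, hPreCons n (j + 1) hkm, hPreCons n j hj, mkU_succ]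
      ext x
      simp only [Set.mem_diff, Set.mem_inter_iff]
      tauto
  · -- the separation conditions
    intro n hn
    obtain ⟨m, rfl⟩ : ∃ m, n = m + 1 := ⟨n - 1, by omega⟩
    have hm2 : 2 ≤ 2 ^ (m + 1) := by
      calc 2 = 2 ^ 1 := by norm_num
      _ ≤ 2 ^ (m + 1) := Nat.pow_le_pow_right (by norm_num) (by omega)
    have hD := hInv m
    refine ⟨?_, ?_, ?_, ?_⟩
    · -- F part
      show F ∩ f ⁻¹' O' (m + 1) ⊆ mkU (Pre (m + 1)) 0
      rw [mkU_zero, hPD m 0 (by omega)]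
      rintro x ⟨hxF, hxW⟩
      by_contra hxD
      have hmem : x ∈ F ∩ f ⁻¹' (seq m).1 ∩ closure (f ⁻¹' (seq m).1 \ (seq m).2 0) :=
        ⟨⟨hxF, hxW⟩, subset_closure ⟨hxW, hxD⟩⟩
      rw [hD.sepF] at hmem
      exact hmem
    · -- T part
      show T ∩ f ⁻¹' O' (m + 1) ⊆ mkU (Pre (m + 1)) (2 ^ (m + 1) - 1)
      rw [show 2 ^ (m + 1) - 1 = (2 ^ (m + 1) - 2) + 1 by omega, mkU_succ,
        hPtop (m + 1) (2 ^ (m + 1) - 2 + 1) (by omega), hPD m (2 ^ (m + 1) - 2) (by omega)]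
      rintro x ⟨hxT, hxW⟩
      refine ⟨hxW, fun hxD => ?_⟩
      have hmem : x ∈ T ∩ (seq m).2 (2 ^ (m + 1) - 2) := ⟨hxT, hxD⟩
      rw [hD.sepT (2 ^ (m + 1) - 2) (by omega)] at hmem
      exact hmem
    · -- F closure part
      show F ∩ clIn (f ⁻¹' O' (m + 1))
          (⋃ k ∈ Finset.Ico 1 (2 ^ (m + 1)), mkU (Pre (m + 1)) k) = ∅
      have hico : ⋃ k ∈ Finset.Ico 1 (2 ^ (m + 1)), mkU (Pre (m + 1)) k =
          f ⁻¹' (O' (m + 1)) \ Pre (m + 1) 0 := by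
        rw [show (1 : ℕ) = 0 + 1 from rfl, show 2 ^ (m + 1) = (2 ^ (m + 1) - 1) + 1 by omega,
          mkU_Ico (hPmono (m + 1)) 0 (2 ^ (m + 1) - 1) (by omega),
          hPtop (m + 1) (2 ^ (m + 1) - 1) (by omega)]
      rw [hico, clIn, hPD m 0 (by omega)]
      rw [Set.eq_empty_iff_forall_notMem]
      rintro x ⟨hxF, hxcl, hxW⟩
      have hmem : x ∈ F ∩ f ⁻¹' (seq m).1 ∩ closure (f ⁻¹' (seq m).1 \ (seq m).2 0) :=
        ⟨⟨hxF, hxW⟩, hxcl⟩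
      rw [hD.sepF] at hmem
      exact hmem
    · -- T closure part
      show clIn (f ⁻¹' O' (m + 1))
          (⋃ k ∈ Finset.range (2 ^ (m + 1) - 1), mkU (Pre (m + 1)) k) ∩ T = ∅
      rw [show 2 ^ (m + 1) - 1 = (2 ^ (m + 1) - 2) + 1 by omega,
        mkU_range (hPmono (m + 1)), hPD m (2 ^ (m + 1) - 2) (by omega), clIn]
      obtain ⟨Cl, hCl, hEq⟩ := hD.Dclosed (2 ^ (m + 1) - 2) (by omega)
      rw [Set.eq_empty_iff_forall_notMem]
      rintro x ⟨⟨hxcl, hxW⟩, hxT⟩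
      have hxD : x ∈ (seq m).2 (2 ^ (m + 1) - 2) := by
        rw [hEq]
        refine ⟨?_, hxW⟩
        have hsub : closure ((seq m).2 (2 ^ (m + 1) - 2)) ⊆ Cl := by
          apply closure_minimal _ hCl
          rw [hEq]; exact Set.inter_subset_left
        exact hsub hxcl
      have hmem : x ∈ T ∩ (seq m).2 (2 ^ (m + 1) - 2) := ⟨hxT, hxD⟩
      rw [hD.sepT (2 ^ (m + 1) - 2) (by omega)] at hmem
      exact hmem
end

section
/- A continuous map f : X → Y is normal if and only if for every open O ⊆ Y, every pair of disjoint subsets F and T closed in the subspace f⁻¹(O), and every point y ∈ O, there exists a consistent family of binary partitions {O_n, {U_nᵏ : 0 ≤ k ≤ 2ⁿ−1} : n ≥ 0} of f at y such that for every n ≥ 1: (a) F ∩ f⁻¹(O_n) ⊆ U_n⁰ and T ∩ f⁻¹(O_n) ⊆ U_n^{2ⁿ−1}; (b) F ∩ cl_{f⁻¹(O_n)}(⋃_{k=1}^{2ⁿ−1} U_nᵏ) = ∅ and cl_{f⁻¹(O_n)}(⋃_{k=0}^{2ⁿ−2} U_nᵏ) ∩ T = ∅. -/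
/- Definitions from fiberwise general topology (Liseev, "Functional approach
to the normality of mappings"). -/

variable {X Y : Type*} [TopologicalSpace X] [TopologicalSpace Y]

/-! ### Auxiliary machinery for the proof -/

/-- `A` is contained in `B` "with room" inside the subspace `S`: there is an open set `G`
of `X` with `A ⊆ G` and `G ∩ S ⊆ B`. -/
def Sandwich (S A B : Set X) : Prop := ∃ G : Set X, IsOpen G ∧ A ⊆ G ∧ G ∩ S ⊆ B

lemma Sandwich.closure_disj {S A B : Set X} (h : Sandwich S A B) :
    A ∩ closure (S \ B) = ∅ := by
  obtain ⟨G, hG, hAG, hGB⟩ := h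
  have h1 : G ∩ (S \ B) = ∅ := by
    ext x
    simp only [Set.mem_inter_iff, Set.mem_diff, Set.mem_empty_iff_false, iff_false, not_and]
    exact fun hxG hxS hxB => hxB (hGB ⟨hxG, hxS⟩)
  have h2 : G ∩ closure (S \ B) = ∅ := by
    have h3 := hG.inter_closure (t := S \ B)
    rw [h1] at h3
    simpa using Set.eq_empty_of_subset_empty (by simpa using h3)
  exact Set.eq_empty_of_subset_empty (h2 ▸ Set.inter_subset_inter_left _ hAG)

/-- The data of one level of the inductive construction in Theorem 3.4. -/
structure LevelData (f : X → Y) (O : Set Y) (F T : Set X) (y : Y) (n : ℕ) where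
  Oy : Set Y
  C : ℕ → Set X
  isOpen : IsOpen Oy
  mem : y ∈ Oy
  sub : 1 ≤ n → Oy ⊆ O
  closed : ∀ p, ClosedIn (f ⁻¹' Oy) (C p)
  top : ∀ p, 2 ^ n - 1 ≤ p → C p = f ⁻¹' Oy
  mono : ∀ p, C p ⊆ C (p + 1)
  sand : ∀ p, Sandwich (f ⁻¹' Oy) (C p) (C (p + 1))
  bot : Sandwich (f ⁻¹' Oy) (F ∩ f ⁻¹' Oy) (C 0)
  tsep : 1 ≤ n → C (2 ^ n - 2) ∩ T = ∅

namespace LevelData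

variable {f : X → Y} {O : Set Y} {F T : Set X} {y : Y} {n : ℕ}

lemma C_subset (L : LevelData f O F T y n) (p : ℕ) : L.C p ⊆ f ⁻¹' L.Oy := by
  obtain ⟨D, _, hD⟩ := L.closed p
  rw [hD]; exact Set.inter_subset_right

lemma mono_le (L : LevelData f O F T y n) {p q : ℕ} (h : p ≤ q) : L.C p ⊆ L.C q := by
  induction q with
  | zero => simp_all
  | succ q ih =>
    rcases Nat.lt_or_ge p (q + 1) with h' | h'
    · exact (ih (by omega)).trans (L.mono q)
    · have : p = q + 1 := by omega
      simp [this]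

lemma clIn_self (L : LevelData f O F T y n) (p : ℕ) :
    clIn (f ⁻¹' L.Oy) (L.C p) ⊆ L.C p := by
  obtain ⟨D, hDc, hD⟩ := L.closed p
  intro x hx
  have h1 : closure (L.C p) ⊆ D := by
    rw [hD]; exact hDc.closure_subset_iff.mpr Set.inter_subset_left
  exact hD ▸ ⟨h1 hx.1, hx.2⟩

/-- The base level of the construction. -/
def base (f : X → Y) (O : Set Y) (F T : Set X) (y : Y) : LevelData f O F T y 0 where
  Oy := Set.univ
  C := fun _ => Set.univ
  isOpen := isOpen_univ
  mem := Set.mem_univ y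
  sub := by omega
  closed := fun _ => ⟨Set.univ, isClosed_univ, by simp⟩
  top := fun _ _ => by simp
  mono := fun _ => subset_rfl
  sand := fun _ => ⟨Set.univ, isOpen_univ, by simp, by simp⟩
  bot := ⟨Set.univ, isOpen_univ, by simp, by simp⟩
  tsep := by omega

end LevelData

/-- Separation with closure control, extracted from normality of the map. -/
lemma NormalMap.interpolate {f : X → Y} (hf : NormalMap f) {P : Set Y} (hP : IsOpen P)
    {A B : Set X} (hA : ClosedIn (f ⁻¹' P) A) (hB : ClosedIn (f ⁻¹' P) B)
    (hAB : A ∩ B = ∅) {y : Y} (hy : y ∈ P) :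
    ∃ (W : Set Y) (G CD : Set X), IsOpen W ∧ y ∈ W ∧ W ⊆ P ∧ IsOpen G ∧ IsClosed CD ∧
      A ∩ f ⁻¹' W ⊆ G ∧ G ∩ f ⁻¹' W ⊆ CD ∩ f ⁻¹' W ∧ (CD ∩ f ⁻¹' W) ∩ B = ∅ := by
  obtain ⟨W, hWo, hWy, hWP, UU, VV, ⟨GU, hGU, hU⟩, ⟨GV, hGV, hV⟩, hAU, hBV, hUV⟩ :=
    hf P hP A B hA hB hAB y hy
  refine ⟨W, GU, closure UU, hWo, hWy, hWP, hGU, isClosed_closure, ?_, ?_, ?_⟩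
  · intro x hx
    have := hAU hx
    rw [hU] at this; exact this.1
  · intro x hx
    have hxU : x ∈ UU := by rw [hU]; exact hx
    exact ⟨subset_closure hxU, hx.2⟩
  · have hUGV : UU ∩ GV = ∅ := by
      ext x
      simp only [Set.mem_inter_iff, Set.mem_empty_iff_false, iff_false, not_and]
      intro hxU hxGV
      have hxW : x ∈ f ⁻¹' W := by rw [hU] at hxU; exact hxU.2
      have : x ∈ UU ∩ VV := ⟨hxU, by rw [hV]; exact ⟨hxGV, hxW⟩⟩
      rw [hUV] at this; exact this
    have hclU : closure UU ∩ GV = ∅ := by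
      have h3 := hGV.inter_closure (t := UU)
      rw [Set.inter_comm UU GV] at hUGV
      rw [hUGV] at h3
      have h4 : GV ∩ closure UU = ∅ := Set.eq_empty_of_subset_empty (by simpa using h3)
      rw [Set.inter_comm] at h4; exact h4
    ext x
    simp only [Set.mem_inter_iff, Set.mem_empty_iff_false, iff_false, not_and]
    rintro ⟨hxcl, hxW⟩ hxB
    have hxV : x ∈ VV := hBV ⟨hxB, hxW⟩
    have hxGV : x ∈ GV := by rw [hV] at hxV; exact hxV.1
    have : x ∈ closure UU ∩ GV := ⟨hxcl, hxGV⟩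
    rw [hclU] at this; exact this


/-- The inductive step of the construction in Theorem 3.4. -/
lemma LevelData.step {f : X → Y} (hf : NormalMap f) {O : Set Y} (hO : IsOpen O)
    {F T : Set X} (hF : ClosedIn (f ⁻¹' O) F) (hT : ClosedIn (f ⁻¹' O) T)
    (hFT : F ∩ T = ∅) {y : Y} (hy : y ∈ O) {n : ℕ} (L : LevelData f O F T y n) :
    ∃ L' : LevelData f O F T y (n + 1),
      L'.Oy ⊆ L.Oy ∧ ∀ k, L'.C (2 * k + 1) = L.C k ∩ f ⁻¹' L'.Oy := by
  classical
  obtain ⟨CF, hCFc, hFeq⟩ := hF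
  obtain ⟨CT, hCTc, hTeq⟩ := hT
  set P : Set Y := L.Oy ∩ O with hPdef
  have hPo : IsOpen P := L.isOpen.inter hO
  have hPy : y ∈ P := ⟨L.mem, hy⟩
  have hPN : f ⁻¹' P ⊆ f ⁻¹' L.Oy := fun x hx => hx.1
  have hPO : f ⁻¹' P ⊆ f ⁻¹' O := fun x hx => hx.2
  have hm1 : 1 ≤ 2 ^ n := Nat.one_le_two_pow
  have key : ∀ k, ∃ (W : Set Y) (G CD : Set X), IsOpen W ∧ y ∈ W ∧ W ⊆ P ∧ IsOpen G ∧
      IsClosed CD ∧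
      ((if k = 0 then F else L.C (k - 1)) ∩ f ⁻¹' P) ∩ f ⁻¹' W ⊆ G ∧
      G ∩ f ⁻¹' W ⊆ CD ∩ f ⁻¹' W ∧
      (CD ∩ f ⁻¹' W) ∩
        ((if k = 2 ^ n - 1 then T else closure (f ⁻¹' L.Oy \ L.C k)) ∩ f ⁻¹' P) = ∅ := by
    intro k
    refine hf.interpolate hPo ?_ ?_ ?_ hPy
    · -- first set is closed in f ⁻¹' P
      by_cases hk0 : k = 0
      · refine ⟨CF, hCFc, ?_⟩
        simp only [if_pos hk0]
        rw [hFeq]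
        ext x
        exact ⟨fun hx => ⟨hx.1.1, hx.2⟩, fun hx => ⟨⟨hx.1, hPO hx.2⟩, hx.2⟩⟩
      · obtain ⟨D, hDc, hDeq⟩ := L.closed (k - 1)
        refine ⟨D, hDc, ?_⟩
        simp only [if_neg hk0]
        rw [hDeq]
        ext x
        exact ⟨fun hx => ⟨hx.1.1, hx.2⟩, fun hx => ⟨⟨hx.1, hPN hx.2⟩, hx.2⟩⟩
    · -- second set is closed in f ⁻¹' P
      by_cases hkt : k = 2 ^ n - 1
      · refine ⟨CT, hCTc, ?_⟩
        simp only [if_pos hkt]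
        rw [hTeq]
        ext x
        exact ⟨fun hx => ⟨hx.1.1, hx.2⟩, fun hx => ⟨⟨hx.1, hPO hx.2⟩, hx.2⟩⟩
      · exact ⟨closure (f ⁻¹' L.Oy \ L.C k), isClosed_closure, by simp only [if_neg hkt]⟩
    · -- disjointness
      by_cases hk0 : k = 0
      · subst hk0
        by_cases hkt : (0 : ℕ) = 2 ^ n - 1
        · simp only [if_pos rfl, if_pos hkt]
          apply Set.eq_empty_of_subset_empty
          intro x hx
          rw [← hFT]
          exact ⟨hx.1.1, hx.2.1⟩
        · simp only [if_pos rfl, if_neg hkt]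
          have hdis := L.bot.closure_disj
          apply Set.eq_empty_of_subset_empty
          intro x hx
          rw [← hdis]
          exact ⟨⟨hx.1.1, hPN hx.1.2⟩, hx.2.1⟩
      · by_cases hkt : k = 2 ^ n - 1
        · simp only [if_neg hk0, if_pos hkt]
          have hn : 1 ≤ n := by
            by_contra hn
            have hn0 : n = 0 := by omega
            subst hn0
            exact hk0 (by simpa using hkt)
          have hdis := L.tsep hn
          have hk1 : k - 1 = 2 ^ n - 2 := by omega
          apply Set.eq_empty_of_subset_empty
          intro x hx
          rw [← hdis, ← hk1]
          exact ⟨hx.1.1, hx.2.1⟩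
        · simp only [if_neg hk0, if_neg hkt]
          have hdis := (L.sand (k - 1)).closure_disj
          have hk1 : k - 1 + 1 = k := by omega
          rw [hk1] at hdis
          apply Set.eq_empty_of_subset_empty
          intro x hx
          rw [← hdis]
          exact ⟨hx.1.1, hx.2.1⟩
  choose W G CD hWo hWy hWP hGo hCDc hAG hGD hDB using key
  set O' : Set Y := P ∩ ⋂ k ∈ Finset.range (2 ^ n), W k with hO'def
  have hO'o : IsOpen O' := hPo.inter (isOpen_biInter_finset fun k _ => hWo k)
  have hO'y : y ∈ O' := ⟨hPy, Set.mem_iInter₂.2 fun k _ => hWy k⟩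
  have hO'P : O' ⊆ P := Set.inter_subset_left
  have hO'W : ∀ k < 2 ^ n, O' ⊆ W k := fun k hk x hx =>
    Set.mem_iInter₂.1 hx.2 k (Finset.mem_range.2 hk)
  set S'' : Set X := f ⁻¹' O' with hS''def
  have hS''P : S'' ⊆ f ⁻¹' P := fun x hx => hx.1
  have hS''N : S'' ⊆ f ⁻¹' L.Oy := fun x hx => hx.1.1
  have hS''W : ∀ k, k < 2 ^ n → S'' ⊆ f ⁻¹' (W k) := fun k hk x hx => hO'W k hk hx
  set C' : ℕ → Set X := fun j =>
    if j % 2 = 1 then L.C (j / 2) ∩ S''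
    else if j / 2 < 2 ^ n then CD (j / 2) ∩ S'' else S'' with hC'def
  have hC'odd : ∀ k, C' (2 * k + 1) = L.C k ∩ S'' := by
    intro k
    have h1 : (2 * k + 1) % 2 = 1 := by omega
    have h2 : (2 * k + 1) / 2 = k := by omega
    simp [hC'def, h1, h2]
  have hC'even : ∀ k, k < 2 ^ n → C' (2 * k) = CD k ∩ S'' := by
    intro k hk
    have h1 : ¬((2 * k) % 2 = 1) := by omega
    have h2 : (2 * k) / 2 = k := by omega
    simp [hC'def, h1, h2, hk]
  have hC'evenBig : ∀ k, 2 ^ n ≤ k → C' (2 * k) = S'' := by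
    intro k hk
    have h1 : ¬((2 * k) % 2 = 1) := by omega
    have h2 : (2 * k) / 2 = k := by omega
    have h3 : ¬(k < 2 ^ n) := by omega
    simp [hC'def, h1, h2, h3]
  have hC'S : ∀ j, C' j ⊆ S'' := by
    intro j
    simp only [hC'def]
    split_ifs
    · exact Set.inter_subset_right
    · exact Set.inter_subset_right
    · exact subset_rfl
  have hDB' : ∀ k, k < 2 ^ n → ∀ x, x ∈ CD k ∩ S'' →
      x ∉ (if k = 2 ^ n - 1 then T else closure (f ⁻¹' L.Oy \ L.C k)) ∩ f ⁻¹' P := by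
    intro k hk x hx hxB
    have h0 := hDB k
    rw [Set.eq_empty_iff_forall_notMem] at h0
    exact h0 x ⟨⟨hx.1, hS''W k hk hx.2⟩, hxB⟩
  have hDC : ∀ k, k < 2 ^ n → k ≠ 2 ^ n - 1 → CD k ∩ S'' ⊆ L.C k := by
    intro k hk hkt x hx
    by_contra hxC
    refine hDB' k hk x hx ?_
    simp only [if_neg hkt]
    exact ⟨subset_closure ⟨hS''N hx.2, hxC⟩, hS''P hx.2⟩
  have hCD' : ∀ k, k < 2 ^ n → k ≠ 0 → L.C (k - 1) ∩ S'' ⊆ CD k ∩ S'' := by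
    intro k hk hk0 x hx
    have hxW : x ∈ f ⁻¹' (W k) := hS''W k hk hx.2
    have hxG : x ∈ G k := by
      refine hAG k ⟨?_, hxW⟩
      simp only [if_neg hk0]
      exact ⟨hx.1, hS''P hx.2⟩
    exact ⟨(hGD k ⟨hxG, hxW⟩).1, hx.2⟩
  have htriv : ∀ A : Set X, Sandwich S'' A S'' :=
    fun A => ⟨Set.univ, isOpen_univ, Set.subset_univ _, Set.inter_subset_right⟩
  -- the fields of the new level
  have hclosed : ∀ p, ClosedIn S'' (C' p) := by
    intro p
    by_cases h : p % 2 = 1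
    · obtain ⟨D, hDc, hDeq⟩ := L.closed (p / 2)
      refine ⟨D, hDc, ?_⟩
      have h4 : C' p = L.C (p / 2) ∩ S'' := by simp [hC'def, h]
      rw [h4, hDeq]
      ext x
      exact ⟨fun hx => ⟨hx.1.1, hx.2⟩, fun hx => ⟨⟨hx.1, hS''N hx.2⟩, hx.2⟩⟩
    · by_cases h2 : p / 2 < 2 ^ n
      · exact ⟨CD (p / 2), hCDc _, by simp [hC'def, h, h2]⟩
      · exact ⟨Set.univ, isClosed_univ, by simp [hC'def, h, h2]⟩
  have hpow : 2 ^ (n + 1) = 2 ^ n * 2 := pow_succ 2 n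
  have htop : ∀ p, 2 ^ (n + 1) - 1 ≤ p → C' p = S'' := by
    intro p hp
    by_cases h : p % 2 = 1
    · have hk : 2 ^ n - 1 ≤ p / 2 := by omega
      have h2 : C' p = L.C (p / 2) ∩ S'' := by simp [hC'def, h]
      rw [h2, L.top (p / 2) hk, Set.inter_eq_self_of_subset_right hS''N]
    · have hk : ¬(p / 2 < 2 ^ n) := by omega
      simp [hC'def, h, hk]
  have hmono : ∀ p, C' p ⊆ C' (p + 1) := by
    intro p
    by_cases h : p % 2 = 1
    · obtain ⟨k, rfl⟩ : ∃ k, p = 2 * k + 1 := ⟨p / 2, by omega⟩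
      have hp1 : 2 * k + 1 + 1 = 2 * (k + 1) := by ring
      rw [hp1, hC'odd]
      by_cases hk1 : k + 1 < 2 ^ n
      · rw [hC'even _ hk1]
        have h5 := hCD' (k + 1) hk1 (by omega)
        simpa using h5
      · rw [hC'evenBig _ (by omega)]
        exact Set.inter_subset_right
    · obtain ⟨k, rfl⟩ : ∃ k, p = 2 * k := ⟨p / 2, by omega⟩
      rw [hC'odd]
      by_cases hk : k < 2 ^ n
      · rw [hC'even _ hk]
        by_cases hkt : k = 2 ^ n - 1
        · rw [L.top k (by omega), Set.inter_eq_self_of_subset_right hS''N]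
          exact Set.inter_subset_right
        · exact fun x hx => ⟨hDC k hk hkt hx, hx.2⟩
      · rw [hC'evenBig _ (by omega), L.top k (by omega),
          Set.inter_eq_self_of_subset_right hS''N]
  have hsand : ∀ p, Sandwich S'' (C' p) (C' (p + 1)) := by
    intro p
    by_cases h : p % 2 = 1
    · obtain ⟨k, rfl⟩ : ∃ k, p = 2 * k + 1 := ⟨p / 2, by omega⟩
      have hp1 : 2 * k + 1 + 1 = 2 * (k + 1) := by ring
      rw [hp1, hC'odd]
      by_cases hk1 : k + 1 < 2 ^ n
      · rw [hC'even _ hk1]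
        refine ⟨G (k + 1), hGo _, ?_, ?_⟩
        · intro x hx
          have hxW : x ∈ f ⁻¹' (W (k + 1)) := hS''W _ hk1 hx.2
          refine hAG _ ⟨?_, hxW⟩
          simp only [if_neg (Nat.succ_ne_zero k), Nat.add_sub_cancel]
          exact ⟨hx.1, hS''P hx.2⟩
        · intro x hx
          have hxW : x ∈ f ⁻¹' (W (k + 1)) := hS''W _ hk1 hx.2
          exact ⟨(hGD _ ⟨hx.1, hxW⟩).1, hx.2⟩
      · rw [hC'evenBig _ (by omega)]
        exact htriv _
    · obtain ⟨k, rfl⟩ : ∃ k, p = 2 * k := ⟨p / 2, by omega⟩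
      rw [hC'odd]
      by_cases hk : k < 2 ^ n
      · by_cases hkt : k = 2 ^ n - 1
        · rw [L.top k (by omega), Set.inter_eq_self_of_subset_right hS''N]
          exact htriv _
        · rw [hC'even _ hk]
          refine ⟨(closure (f ⁻¹' L.Oy \ L.C k))ᶜ, isClosed_closure.isOpen_compl, ?_, ?_⟩
          · intro x hx hxcl
            refine hDB' _ hk x hx ?_
            simp only [if_neg hkt]
            exact ⟨hxcl, hS''P hx.2⟩
          · intro x hx
            refine ⟨?_, hx.2⟩
            by_contra hxC
            exact hx.1 (subset_closure ⟨hS''N hx.2, hxC⟩)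
      · rw [L.top k (by omega), Set.inter_eq_self_of_subset_right hS''N]
        exact htriv _
  have hbot : Sandwich S'' (F ∩ S'') (C' 0) := by
    have h0 : C' 0 = CD 0 ∩ S'' := by
      have h1 := hC'even 0 hm1
      simpa using h1
    rw [h0]
    refine ⟨G 0, hGo 0, ?_, ?_⟩
    · intro x hx
      have hxW : x ∈ f ⁻¹' (W 0) := hS''W 0 hm1 hx.2
      refine hAG 0 ⟨?_, hxW⟩
      simp only [if_pos rfl]
      exact ⟨hx.1, hS''P hx.2⟩
    · intro x hx
      have hxW : x ∈ f ⁻¹' (W 0) := hS''W 0 hm1 hx.2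
      exact ⟨(hGD 0 ⟨hx.1, hxW⟩).1, hx.2⟩
  have htsep : 1 ≤ n + 1 → C' (2 ^ (n + 1) - 2) ∩ T = ∅ := by
    intro _
    have hidx : 2 ^ (n + 1) - 2 = 2 * (2 ^ n - 1) := by omega
    rw [hidx, hC'even _ (by omega)]
    apply Set.eq_empty_of_subset_empty
    intro x hx
    exfalso
    refine hDB' (2 ^ n - 1) (by omega) x hx.1 ?_
    simp only [if_pos rfl]
    exact ⟨hx.2, hS''P hx.1.2⟩
  exact ⟨⟨O', C', hO'o, hO'y, fun _ x hx => (hO'P hx).2, hclosed, htop, hmono, hsand,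
    hbot, htsep⟩, fun x hx => (hO'P hx).1, hC'odd⟩


/-- The blocks of the partition determined by a chain of sets. -/
def chainBlocks (C : ℕ → Set X) : ℕ → Set X :=
  fun m => C m \ (if m = 0 then ∅ else C (m - 1))

lemma chain_mono {C : ℕ → Set X} (hmono : ∀ p, C p ⊆ C (p + 1)) :
    ∀ {i j : ℕ}, i ≤ j → C i ⊆ C j := by
  intro i j hij
  induction j with
  | zero =>
    have h0 : i = 0 := by omega
    subst h0; exact subset_rfl
  | succ j ihj =>
    rcases Nat.lt_or_ge i (j + 1) with h' | h'
    · exact (ihj (by omega)).trans (hmono j)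
    · have h0 : i = j + 1 := by omega
      subst h0; exact subset_rfl

lemma chainBlocks_prefix (C : ℕ → Set X) (hmono : ∀ p, C p ⊆ C (p + 1)) (p : ℕ) :
    (⋃ m ∈ Finset.range (p + 1), chainBlocks C m) = C p := by
  induction p with
  | zero => simp [chainBlocks]
  | succ p ih =>
    rw [Finset.range_add_one, Finset.set_biUnion_insert, ih]
    have h1 : chainBlocks C (p + 1) = C (p + 1) \ C p := by
      simp [chainBlocks]
    rw [h1, Set.diff_union_of_subset (hmono p)]

lemma chainBlocks_Ico (C : ℕ → Set X) (hmono : ∀ p, C p ⊆ C (p + 1)) (a b : ℕ)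
    (ha : 1 ≤ a) (hab : a ≤ b) :
    (⋃ m ∈ Finset.Ico a b, chainBlocks C m) = C (b - 1) \ C (a - 1) := by
  induction b, hab using Nat.le_induction with
  | base => simp
  | succ b hb ih =>
    rw [Nat.Ico_succ_right_eq_insert_Ico hb, Finset.set_biUnion_insert, ih]
    have hb0 : ¬ b = 0 := by omega
    have hb1 : chainBlocks C b = C b \ C (b - 1) := by
      simp [chainBlocks, hb0]
    rw [hb1]
    have h2 : C (a - 1) ⊆ C (b - 1) := chain_mono hmono (by omega)
    have h3 : C (b - 1) ⊆ C b := chain_mono hmono (by omega)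
    have h4 : b + 1 - 1 = b := by omega
    rw [h4]
    ext x
    simp only [Set.mem_union, Set.mem_diff]
    constructor
    · rintro (⟨h5, h6⟩ | ⟨h5, h6⟩)
      · exact ⟨h5, fun h7 => h6 (h2 h7)⟩
      · exact ⟨h3 h5, h6⟩
    · rintro ⟨h5, h6⟩
      by_cases h7 : x ∈ C (b - 1)
      · exact Or.inr ⟨h7, h6⟩
      · exact Or.inl ⟨h5, h7⟩

lemma Set.diff_union_diff_eq {A B Cc : Set X} (h1 : A ⊆ B) (h2 : B ⊆ Cc) :
    (B \ A) ∪ (Cc \ B) = Cc \ A := by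
  ext x
  simp only [Set.mem_union, Set.mem_diff]
  constructor
  · rintro (⟨h5, h6⟩ | ⟨h5, h6⟩)
    · exact ⟨h2 h5, h6⟩
    · exact ⟨h5, fun h7 => h6 (h1 h7)⟩
  · rintro ⟨h5, h6⟩
    by_cases h7 : x ∈ B
    · exact Or.inl ⟨h7, h6⟩
    · exact Or.inr ⟨h5, h7⟩

lemma LevelData.partition {f : X → Y} {O : Set Y} {F T : Set X} {y : Y} {n : ℕ}
    (L : LevelData f O F T y n) :
    IsRegularPartition (f ⁻¹' L.Oy) (2 ^ n) (chainBlocks L.C) := by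
  have hm1 : 1 ≤ 2 ^ n := Nat.one_le_two_pow
  constructor
  · exact fun m _ x hx => L.C_subset m hx.1
  · intro m hm m' hm' hne
    have key : ∀ a b, a < b → chainBlocks L.C a ∩ chainBlocks L.C b = ∅ := by
      intro a b hab
      apply Set.eq_empty_of_subset_empty
      rintro x ⟨hxa, hxb⟩
      exfalso
      have h1 : x ∈ L.C a := hxa.1
      have h2 : x ∈ L.C (b - 1) := L.mono_le (by omega) h1
      have hb0 : ¬ b = 0 := by omega
      exact hxb.2 (by simp only [if_neg hb0]; exact h2)
    rcases Nat.lt_or_ge m m' with h | h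
    · exact key m m' h
    · have h' : m' < m := by omega
      rw [Set.inter_comm]
      exact key m' m h'
  · have h1 : (2 : ℕ) ^ n = (2 ^ n - 1) + 1 := by omega
    rw [h1, chainBlocks_prefix L.C L.mono, L.top _ le_rfl]
  · intro p _
    rw [chainBlocks_prefix L.C L.mono]
    exact L.closed p
  · intro p hp
    rw [chainBlocks_prefix L.C L.mono,
      chainBlocks_Ico L.C L.mono (p + 2) (2 ^ n) (by omega) (by omega),
      L.top (2 ^ n - 1) le_rfl]
    have h6 : p + 2 - 1 = p + 1 := by omega
    rw [h6]
    unfold clIn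
    have hdis := (L.sand p).closure_disj
    apply Set.eq_empty_of_subset_empty
    intro x hx
    rw [← hdis]
    exact ⟨hx.1, hx.2.1⟩

/-- Theorem 3.4, (A) ⇔ (B): `f` is normal iff disjoint closed (in `f⁻¹ O`) sets
can be separated by a consistent family of binary partitions of `f` at each point `y ∈ O`. -/
theorem normalMap_iff_consistentBinaryPartitions {X Y : Type*} [TopologicalSpace X]
    [TopologicalSpace Y] (f : X → Y) (hf : Continuous f) :
    NormalMap f ↔
      ∀ O : Set Y, IsOpen O → ∀ F T : Set X,
        ClosedIn (f ⁻¹' O) F → ClosedIn (f ⁻¹' O) T → F ∩ T = ∅ →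
        ∀ y ∈ O, ∃ (O' : ℕ → Set Y) (U : ℕ → ℕ → Set X),
          ConsistentBinaryPartitions f y O' U ∧
          ∀ n, 1 ≤ n →
            (F ∩ f ⁻¹' O' n ⊆ U n 0) ∧
            (T ∩ f ⁻¹' O' n ⊆ U n (2 ^ n - 1)) ∧
            F ∩ clIn (f ⁻¹' O' n) (⋃ k ∈ Finset.Ico 1 (2 ^ n), U n k) = ∅ ∧
            clIn (f ⁻¹' O' n) (⋃ k ∈ Finset.range (2 ^ n - 1), U n k) ∩ T = ∅ := by
  constructor
  · -- normal → partitions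
    intro hnf O hO F T hF hT hFT y hy
    have hstep : ∀ n (L : LevelData f O F T y n), ∃ L' : LevelData f O F T y (n + 1),
        L'.Oy ⊆ L.Oy ∧ ∀ k, L'.C (2 * k + 1) = L.C k ∩ f ⁻¹' L'.Oy :=
      fun n L => L.step hnf hO hF hT hFT hy
    let seq : ∀ n, LevelData f O F T y n := fun n =>
      Nat.rec (LevelData.base f O F T y) (fun n L => (hstep n L).choose) n
    have hlink : ∀ n, (seq (n + 1)).Oy ⊆ (seq n).Oy ∧
        ∀ k, (seq (n + 1)).C (2 * k + 1) = (seq n).C k ∩ f ⁻¹' (seq (n + 1)).Oy :=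
      fun n => (hstep n (seq n)).choose_spec
    refine ⟨fun n => (seq n).Oy, fun n => chainBlocks (seq n).C, ⟨?_, ?_, ?_, ?_, ?_, ?_⟩, ?_⟩
    · exact fun n => (seq n).isOpen
    · exact fun n => (seq n).mem
    · rfl
    · exact fun n => fun x hx => (hlink n).1 hx
    · exact fun n => (seq n).partition
    · -- consistency
      intro n k hk
      have hlk := (hlink n).2
      by_cases hk0 : k = 0
      · subst hk0
        have h1 : chainBlocks (seq (n + 1)).C (2 * 0) = (seq (n + 1)).C 0 := by
          simp [chainBlocks]
        have h2 : chainBlocks (seq (n + 1)).C (2 * 0 + 1) =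
            (seq (n + 1)).C 1 \ (seq (n + 1)).C 0 := by
          simp [chainBlocks]
        have h3 : chainBlocks (seq n).C 0 = (seq n).C 0 := by simp [chainBlocks]
        rw [h1, h2, h3, Set.union_comm, Set.diff_union_of_subset ((seq (n + 1)).mono 0)]
        have h4 := hlk 0
        simpa using h4
      · have h1 : chainBlocks (seq (n + 1)).C (2 * k) =
            (seq (n + 1)).C (2 * k) \ (seq (n + 1)).C (2 * (k - 1) + 1) := by
          have e1 : ¬ (2 * k = 0) := by omega
          have e2 : 2 * k - 1 = 2 * (k - 1) + 1 := by omega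
          simp only [chainBlocks, if_neg e1, e2]
        have h2 : chainBlocks (seq (n + 1)).C (2 * k + 1) =
            (seq (n + 1)).C (2 * k + 1) \ (seq (n + 1)).C (2 * k) := by
          have e1 : ¬ (2 * k + 1 = 0) := by omega
          have e2 : 2 * k + 1 - 1 = 2 * k := by omega
          simp only [chainBlocks, if_neg e1, e2]
        have h3 : chainBlocks (seq n).C k = (seq n).C k \ (seq n).C (k - 1) := by
          simp only [chainBlocks, if_neg hk0]
        have hsub1 : (seq (n + 1)).C (2 * (k - 1) + 1) ⊆ (seq (n + 1)).C (2 * k) := by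
          have e2 : 2 * (k - 1) + 1 + 1 = 2 * k := by omega
          have := (seq (n + 1)).mono (2 * (k - 1) + 1)
          rwa [e2] at this
        have hsub2 : (seq (n + 1)).C (2 * k) ⊆ (seq (n + 1)).C (2 * k + 1) :=
          (seq (n + 1)).mono (2 * k)
        rw [h1, h2, h3, Set.diff_union_diff_eq hsub1 hsub2, hlk k, hlk (k - 1)]
        ext x
        simp only [Set.mem_diff, Set.mem_inter_iff]
        constructor
        · rintro ⟨⟨hx1, hx2⟩, hx3⟩
          exact ⟨⟨hx1, fun h => hx3 ⟨h, hx2⟩⟩, hx2⟩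
        · rintro ⟨⟨hx1, hx3⟩, hx2⟩
          exact ⟨⟨hx1, hx2⟩, fun h => hx3 h.1⟩
    · -- the four conditions for n ≥ 1
      intro n hn
      set L := seq n with hLdef
      have hm1 : 1 ≤ 2 ^ n := Nat.one_le_two_pow
      have hm2 : 2 ≤ 2 ^ n := by
        calc (2 : ℕ) = 2 ^ 1 := rfl
        _ ≤ 2 ^ n := Nat.pow_le_pow_right (by norm_num) hn
      refine ⟨?_, ?_, ?_, ?_⟩
      · -- F ∩ f⁻¹Oy ⊆ U n 0
        obtain ⟨G, hGo, hFG, hGS⟩ := L.bot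
        intro x hx
        have hx0 : x ∈ L.C 0 := hGS ⟨hFG hx, hx.2⟩
        exact ⟨hx0, by simp⟩
      · -- T ∩ f⁻¹Oy ⊆ U n (2^n - 1)
        intro x hx
        have hxS : x ∈ L.C (2 ^ n - 1) := by
          rw [L.top _ le_rfl]; exact hx.2
        refine ⟨hxS, ?_⟩
        have e1 : ¬ (2 ^ n - 1 = 0) := by omega
        simp only [if_neg e1]
        intro hxC
        have e2 : 2 ^ n - 1 - 1 = 2 ^ n - 2 := by omega
        rw [e2] at hxC
        have hdis := L.tsep hn
        rw [Set.eq_empty_iff_forall_notMem] at hdis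
        exact hdis x ⟨hxC, hx.1⟩
      · -- F ∩ clIn ... = ∅
        rw [chainBlocks_Ico L.C L.mono 1 (2 ^ n) le_rfl hm1, L.top (2 ^ n - 1) le_rfl]
        have e1 : (1 : ℕ) - 1 = 0 := rfl
        rw [e1]
        unfold clIn
        have hdis := L.bot.closure_disj
        apply Set.eq_empty_of_subset_empty
        rintro x ⟨hx1, hx2, hx3⟩
        exfalso
        rw [Set.eq_empty_iff_forall_notMem] at hdis
        exact hdis x ⟨⟨hx1, hx3⟩, hx2⟩
      · -- clIn ... ∩ T = ∅
        have e1 : (2 : ℕ) ^ n - 1 = (2 ^ n - 2) + 1 := by omega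
        rw [e1, chainBlocks_prefix L.C L.mono]
        have hsub := L.clIn_self (2 ^ n - 2)
        have hdis := L.tsep hn
        apply Set.eq_empty_of_subset_empty
        rintro x ⟨hx1, hx2⟩
        exfalso
        rw [Set.eq_empty_iff_forall_notMem] at hdis
        exact hdis x ⟨hsub hx1, hx2⟩
  · -- partitions → normal
    intro h O hO A B hA hB hAB y hy
    obtain ⟨O', U, hcons, hprop⟩ := h O hO A B hA hB hAB y hy
    obtain ⟨ha1, ha2, hb1, hb2⟩ := hprop 1 le_rfl
    have hIco : Finset.Ico 1 (2 ^ 1) = {1} := by decide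
    have hrange : Finset.range (2 ^ 1 - 1) = {0} := by decide
    have hidx : (2 : ℕ) ^ 1 - 1 = 1 := by norm_num
    rw [hidx] at ha2
    have hb1' : A ∩ (closure (U 1 1) ∩ f ⁻¹' (O' 1)) = ∅ := by
      have h0 := hb1
      rw [hIco] at h0
      simpa [clIn] using h0
    have hb2' : (closure (U 1 0) ∩ f ⁻¹' (O' 1)) ∩ B = ∅ := by
      have h0 := hb2
      rw [hrange] at h0
      simpa [clIn] using h0
    refine ⟨O' 1 ∩ O, (hcons.isOpen 1).inter hO, ⟨hcons.mem 1, hy⟩, Set.inter_subset_right, ?_⟩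
    have hW1 : f ⁻¹' (O' 1 ∩ O) ⊆ f ⁻¹' (O' 1) := fun x hx => hx.1
    refine ⟨(closure (U 1 1))ᶜ ∩ f ⁻¹' (O' 1 ∩ O), (closure (U 1 0))ᶜ ∩ f ⁻¹' (O' 1 ∩ O),
      ⟨(closure (U 1 1))ᶜ, isClosed_closure.isOpen_compl, rfl⟩,
      ⟨(closure (U 1 0))ᶜ, isClosed_closure.isOpen_compl, rfl⟩, ?_, ?_, ?_⟩
    · rintro x ⟨hxA, hxW⟩
      refine ⟨?_, hxW⟩
      intro hxcl
      rw [Set.eq_empty_iff_forall_notMem] at hb1'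
      exact hb1' x ⟨hxA, hxcl, hW1 hxW⟩
    · rintro x ⟨hxB, hxW⟩
      refine ⟨?_, hxW⟩
      intro hxcl
      rw [Set.eq_empty_iff_forall_notMem] at hb2'
      exact hb2' x ⟨⟨hxcl, hW1 hxW⟩, hxB⟩
    · apply Set.eq_empty_of_subset_empty
      rintro x ⟨⟨hx1, hxW⟩, ⟨hx0, _⟩⟩
      exfalso
      have hxO1 : x ∈ f ⁻¹' (O' 1) := hW1 hxW
      have hcov := (hcons.part 1).cover
      rw [← hcov] at hxO1
      simp only [Set.mem_iUnion, Finset.mem_range] at hxO1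
      obtain ⟨k, hk, hxU⟩ := hxO1
      have h21 : (2 : ℕ) ^ 1 = 2 := by norm_num
      rw [h21] at hk
      interval_cases k
      · exact hx0 (subset_closure hxU)
      · exact hx1 (subset_closure hxU)
end

section
/- A continuous map f : X → Y is normal if and only if for every open O ⊆ Y, every pair of disjoint subsets F and T closed in the subspace f⁻¹(O), and every point y ∈ O, there exist a function φ : X → [0,1] f-continuous at y and an open neighborhood Oy of y such that osc_φ(f⁻¹(Oy)) < 1/2 and: F ∩ f⁻¹(Oy) ⊆ φ⁻¹(0) ∩ f⁻¹(Oy); T ∩ f⁻¹(Oy) ⊆ φ⁻¹(1) ∩ f⁻¹(Oy); F ∩ f⁻¹(Oy) ⊆ f⁻¹(Oy) \ cl_{f⁻¹(Oy)}(φ⁻¹([1/2, 1]) ∩ f⁻¹(Oy)); and T ∩ f⁻¹(Oy) ⊆ int_{f⁻¹(Oy)}(φ⁻¹([1/2, 1]) ∩ f⁻¹(Oy)). (The forward implication is the Urysohn Lemma for mappings.) -/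
/- Definitions from fiberwise general topology (Liseev, "Functional approach
to the normality of mappings"). -/

variable {X Y : Type*} [TopologicalSpace X] [TopologicalSpace Y]

section UrysohnAux
set_option linter.unusedSectionVars false

namespace UrysohnProof

variable {X Y : Type*} [TopologicalSpace X] [TopologicalSpace Y]

lemma abs_sub_le_one' {φ : X → ℝ} (hb : ∀ x, φ x ∈ Set.Icc (0:ℝ) 1) (x z : X) :
    |φ x - φ z| ≤ 1 := by
  have h1 := hb x; have h2 := hb z
  simp only [Set.mem_Icc] at h1 h2
  rw [abs_sub_le_iff]; constructor <;> linarith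

lemma sSup_abs_nonneg {φ : X → ℝ} (hb : ∀ x, φ x ∈ Set.Icc (0:ℝ) 1) {G : Set X} (x : X)
    (hx : x ∈ G) : 0 ≤ sSup ((fun z => |φ x - φ z|) '' (G ∩ Set.univ)) := by
  apply le_csSup
  · exact ⟨1, by rintro r ⟨z, hz, rfl⟩; exact abs_sub_le_one' hb x z⟩
  · exact ⟨x, ⟨hx, trivial⟩, by simp⟩

lemma bddBelow_oscSet {φ : X → ℝ} (hb : ∀ x, φ x ∈ Set.Icc (0:ℝ) 1) (x : X) :
    BddBelow {r : ℝ | ∃ G, IsOpen G ∧ x ∈ G ∧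
      r = sSup ((fun z => |φ x - φ z|) '' (G ∩ Set.univ))} :=
  ⟨0, by rintro r ⟨G, hG, hxG, rfl⟩; exact sSup_abs_nonneg hb x hxG⟩

lemma osc_le_of_nhd {φ : X → ℝ} (hb : ∀ x, φ x ∈ Set.Icc (0:ℝ) 1) {x : X} {G : Set X}
    (hG : IsOpen G) (hxG : x ∈ G) {c : ℝ} (hc : 0 ≤ c)
    (h : ∀ z ∈ G, |φ x - φ z| ≤ c) : oscWithin Set.univ φ x ≤ c := by
  have hmem : sSup ((fun z => |φ x - φ z|) '' (G ∩ Set.univ)) ∈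
      {r : ℝ | ∃ G, IsOpen G ∧ x ∈ G ∧
        r = sSup ((fun z => |φ x - φ z|) '' (G ∩ Set.univ))} := ⟨G, hG, hxG, rfl⟩
  refine le_trans (csInf_le (bddBelow_oscSet hb x) hmem) ?_
  apply Real.sSup_le _ hc
  rintro r ⟨z, hz, rfl⟩; exact h z hz.1

lemma oscWithin_le_one {φ : X → ℝ} (hb : ∀ x, φ x ∈ Set.Icc (0:ℝ) 1) (x : X) :
    oscWithin Set.univ φ x ≤ 1 :=
  osc_le_of_nhd hb isOpen_univ trivial zero_le_one (fun z _ => abs_sub_le_one' hb x z)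

lemma oscOn_le {φ : X → ℝ} (hb : ∀ x, φ x ∈ Set.Icc (0:ℝ) 1) (A : Set X) {c : ℝ} (hc : 0 ≤ c)
    (h : ∀ x ∈ A, ∃ G, IsOpen G ∧ x ∈ G ∧ ∀ z ∈ G, |φ x - φ z| ≤ c) :
    oscOn φ A ≤ c := by
  apply Real.sSup_le _ hc
  rintro r ⟨x, hx, rfl⟩
  obtain ⟨G, hG, hxG, hGc⟩ := h x hx
  exact osc_le_of_nhd hb hG hxG hc hGc

lemma osc_le_oscOn {φ : X → ℝ} (hb : ∀ x, φ x ∈ Set.Icc (0:ℝ) 1) {A : Set X} {x : X}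
    (hx : x ∈ A) : oscWithin Set.univ φ x ≤ oscOn φ A :=
  le_csSup ⟨1, by rintro r ⟨x', _, rfl⟩; exact oscWithin_le_one hb x'⟩
    (Set.mem_image_of_mem _ hx)

lemma exists_nhd_of_osc_lt {φ : X → ℝ} (hb : ∀ x, φ x ∈ Set.Icc (0:ℝ) 1) {x : X} {c : ℝ}
    (h : oscWithin Set.univ φ x < c) :
    ∃ G, IsOpen G ∧ x ∈ G ∧ ∀ z ∈ G, |φ x - φ z| < c := by
  have hne : Set.Nonempty {r : ℝ | ∃ G, IsOpen G ∧ x ∈ G ∧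
      r = sSup ((fun z => |φ x - φ z|) '' (G ∩ Set.univ))} :=
    ⟨_, Set.univ, isOpen_univ, trivial, rfl⟩
  obtain ⟨r, hrmem, hrc⟩ := exists_lt_of_csInf_lt hne h
  obtain ⟨G, hG, hxG, rfl⟩ := hrmem
  refine ⟨G, hG, hxG, fun z hz => lt_of_le_of_lt ?_ hrc⟩
  exact le_csSup ⟨1, by rintro s ⟨w, hw, rfl⟩; exact abs_sub_le_one' hb x w⟩
    ⟨z, ⟨hz, trivial⟩, rfl⟩

end UrysohnProof

end UrysohnAux
section UrysohnConstr
set_option linter.unusedSectionVars false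

namespace UrysohnProof

variable {X Y : Type*} [TopologicalSpace X] [TopologicalSpace Y]

/-- One application of prenormality: produces a smaller neighborhood `W` of `y` and an
open (in `X`) set `U ⊆ f⁻¹ W` containing `A ∩ f⁻¹ W` whose closure misses `B` over `W`. -/
lemma sep_step {f : X → Y} (hf : Continuous f) (hn : NormalMap f) {P : Set Y} (hP : IsOpen P)
    {A B : Set X} (hA : ClosedIn (f ⁻¹' P) A) (hB : ClosedIn (f ⁻¹' P) B) (hAB : A ∩ B = ∅)
    {y : Y} (hy : y ∈ P) :
    ∃ (W : Set Y) (U : Set X), IsOpen W ∧ y ∈ W ∧ W ⊆ P ∧ IsOpen U ∧ U ⊆ f ⁻¹' W ∧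
      A ∩ f ⁻¹' W ⊆ U ∧ closure U ∩ (B ∩ f ⁻¹' W) = ∅ := by
  obtain ⟨W, hWo, hyW, hWP, U, V, ⟨GU, hGU, rfl⟩, ⟨GV, hGV, rfl⟩, hAU, hBV, hUV⟩ :=
    hn P hP A B hA hB hAB y hy
  have hWpre : IsOpen (f ⁻¹' W) := hWo.preimage hf
  refine ⟨W, GU ∩ f ⁻¹' W, hWo, hyW, hWP, hGU.inter hWpre, Set.inter_subset_right, hAU, ?_⟩
  have hVopen : IsOpen (GV ∩ f ⁻¹' W) := hGV.inter hWpre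
  have hdisj : (GV ∩ f ⁻¹' W) ∩ closure (GU ∩ f ⁻¹' W) = ∅ := by
    apply Set.eq_empty_of_subset_empty
    refine (hVopen.inter_closure).trans ?_
    rw [Set.inter_comm (GV ∩ f ⁻¹' W)] at *
    rw [hUV, closure_empty]
  apply Set.eq_empty_of_subset_empty
  intro z hz
  have hzV : z ∈ GV ∩ f ⁻¹' W := hBV hz.2
  have : z ∈ (GV ∩ f ⁻¹' W) ∩ closure (GU ∩ f ⁻¹' W) := ⟨hzV, hz.1⟩
  rw [hdisj] at this; exact this

/-- Level-`n` data for the dyadic construction. -/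
structure ULevel (f : X → Y) (T : Set X) (O : Set Y) (y : Y) (n : ℕ) where
  W : Set Y
  u : ℕ → Set X
  hWopen : IsOpen W
  hyW : y ∈ W
  hWO : W ⊆ O
  huopen : ∀ k, IsOpen (u k)
  hTop : ∀ k, 2 ^ n ≤ k → u k = Set.univ
  hmono : ∀ k k', k ≤ k' → u k ⊆ u k'
  hH : ∀ k k', k < k' → closure (u k) ∩ f ⁻¹' W ⊆ u k'
  hT : ∀ k, k < 2 ^ n → u k ∩ T = ∅
  hTcl : ∀ k, k < 2 ^ n → closure (u k) ∩ T ∩ f ⁻¹' W = ∅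

lemma ULevel.init {f : X → Y} (hf : Continuous f) (hn : NormalMap f) {O : Set Y}
    (hO : IsOpen O) {F T : Set X} (hFc : ClosedIn (f ⁻¹' O) F) (hTc : ClosedIn (f ⁻¹' O) T)
    (hFT : F ∩ T = ∅) {y : Y} (hy : y ∈ O) :
    ∃ L : ULevel f T O y 0, F ∩ f ⁻¹' L.W ⊆ L.u 0 := by
  obtain ⟨W, U, hWo, hyW, hWP, hUo, hUW, hFU, hclT⟩ := sep_step hf hn hO hFc hTc hFT hy
  refine ⟨⟨W, fun k => if k = 0 then U else Set.univ, hWo, hyW, hWP, ?_, ?_, ?_, ?_, ?_, ?_⟩, ?_⟩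
  · intro k; by_cases h : k = 0 <;> simp [h, hUo]
  · intro k hk; have : k ≠ 0 := by simpa using Nat.one_le_iff_ne_zero.mp hk
    simp [this]
  · intro k k' hkk'; by_cases h' : k' = 0
    · have : k = 0 := by omega
      simp [h', this]
    · simp [h']
  · intro k k' hkk'; have h' : k' ≠ 0 := by omega
    simp [h']
  · intro k hk; have : k = 0 := by omega
    subst this; simp only [if_pos rfl]
    apply Set.eq_empty_of_subset_empty; intro z hz
    have : z ∈ closure U ∩ (T ∩ f ⁻¹' W) := ⟨subset_closure hz.1, hz.2, hUW hz.1⟩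
    rw [hclT] at this; exact this
  · intro k hk; have : k = 0 := by omega
    subst this; simp only [if_pos rfl]
    apply Set.eq_empty_of_subset_empty; intro z hz
    have : z ∈ closure U ∩ (T ∩ f ⁻¹' W) := ⟨hz.1.1, hz.1.2, hz.2⟩
    rw [hclT] at this; exact this
  · simpa using hFU

/-- Partial data for constructing level `n+1` from level `n`: the first `k` odd sets. -/
structure UPartial {f : X → Y} {T : Set X} {O : Set Y} {y : Y} {n : ℕ}
    (L : ULevel f T O y n) (k : ℕ) where
  W : Set Y
  v : ℕ → Set X
  hWopen : IsOpen W
  hyW : y ∈ W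
  hWsub : W ⊆ L.W
  hvopen : ∀ j, IsOpen (v j)
  hvTop : ∀ j, k ≤ j → v j = Set.univ
  hlow : ∀ j, L.u j ⊆ v j
  hup : ∀ j, j < k → v j ⊆ L.u (j + 1)
  hclA : ∀ j, closure (L.u j) ∩ f ⁻¹' W ⊆ v j
  hclB : ∀ j, j < k → closure (v j) ∩ f ⁻¹' W ⊆ L.u (j + 1)
  hclT : ∀ j, j < k → closure (v j) ∩ T ∩ f ⁻¹' W = ∅
  hvT : ∀ j, j < k → v j ∩ T = ∅

lemma UPartial.init {f : X → Y} {T : Set X} {O : Set Y} {y : Y} {n : ℕ}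
    (L : ULevel f T O y n) : Nonempty (UPartial L 0) := by
  refine ⟨⟨L.W, fun _ => Set.univ, L.hWopen, L.hyW, subset_rfl, fun _ => isOpen_univ,
    fun _ _ => rfl, fun _ => Set.subset_univ _, ?_, fun _ => Set.subset_univ _, ?_, ?_, ?_⟩⟩
  all_goals intro j hj; omega

lemma UPartial.step {f : X → Y} (hf : Continuous f) (hn : NormalMap f) {T : Set X} {O : Set Y}
    {y : Y} {n : ℕ} {L : ULevel f T O y n} (hTc : ClosedIn (f ⁻¹' O) T) {k : ℕ}
    (hk : k < 2 ^ n) (P : UPartial L k) : Nonempty (UPartial L (k + 1)) := by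
  obtain ⟨TC, hTCc, hTeq⟩ := hTc
  have hPWpre : f ⁻¹' P.W ⊆ f ⁻¹' L.W := fun z hz => P.hWsub hz
  have hPWO : P.W ⊆ O := P.hWsub.trans L.hWO
  -- the two sets to separate over P.W
  set A : Set X := closure (L.u k) ∩ f ⁻¹' P.W with hAdef
  set B : Set X := ((L.u (k + 1))ᶜ ∪ TC) ∩ f ⁻¹' P.W with hBdef
  have hAc : ClosedIn (f ⁻¹' P.W) A := ⟨closure (L.u k), isClosed_closure, rfl⟩
  have hBc : ClosedIn (f ⁻¹' P.W) B :=
    ⟨(L.u (k + 1))ᶜ ∪ TC, ((L.huopen (k+1)).isClosed_compl).union hTCc, rfl⟩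
  have hTmem : ∀ z : X, z ∈ T → z ∈ TC := by
    intro z hz; rw [hTeq] at hz; exact hz.1
  have hTmem' : ∀ z : X, z ∈ TC → z ∈ f ⁻¹' O → z ∈ T := by
    intro z hz hzO; rw [hTeq]; exact ⟨hz, hzO⟩
  have hAB : A ∩ B = ∅ := by
    apply Set.eq_empty_of_subset_empty
    rintro z ⟨⟨hzcl, hzW⟩, hzB, -⟩
    have hzu : z ∈ L.u (k + 1) := L.hH k (k + 1) (Nat.lt_succ_self k) ⟨hzcl, hPWpre hzW⟩
    rcases hzB with h | h
    · exact h hzu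
    · have hzT : z ∈ T := hTmem' z h (hPWO hzW)
      have : z ∈ closure (L.u k) ∩ T ∩ f ⁻¹' L.W := ⟨⟨hzcl, hzT⟩, hPWpre hzW⟩
      rw [L.hTcl k hk] at this; exact this
  obtain ⟨W', U₀, hW'o, hyW', hW'P, hU₀o, hU₀W, hAU₀, hclB₀⟩ :=
    sep_step hf hn P.hWopen hAc hBc hAB P.hyW
  have hW'pre : f ⁻¹' W' ⊆ f ⁻¹' P.W := fun z hz => hW'P hz
  -- key: closure U₀ over W' avoids B
  have hkey : ∀ z : X, z ∈ closure U₀ → z ∈ f ⁻¹' W' → z ∈ L.u (k + 1) ∧ z ∉ T := by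
    intro z hzc hzW
    constructor
    · by_contra h
      have : z ∈ closure U₀ ∩ (B ∩ f ⁻¹' W') := ⟨hzc, ⟨Or.inl h, hW'pre hzW⟩, hzW⟩
      rw [hclB₀] at this; exact this
    · intro hzT
      have : z ∈ closure U₀ ∩ (B ∩ f ⁻¹' W') :=
        ⟨hzc, ⟨Or.inr (hTmem z hzT), hW'pre hzW⟩, hzW⟩
      rw [hclB₀] at this; exact this
  refine ⟨⟨W', fun j => if j = k then U₀ ∪ L.u k else P.v j, hW'o, hyW', hW'P.trans P.hWsub,
    ?_, ?_, ?_, ?_, ?_, ?_, ?_, ?_⟩⟩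
  · intro j; by_cases h : j = k <;> simp [h, hU₀o.union (L.huopen k), P.hvopen]
  · intro j hj; have h : j ≠ k := by omega
    simp [h, P.hvTop j (by omega)]
  · intro j; by_cases h : j = k
    · subst h; simp only [if_pos rfl]; exact Set.subset_union_right
    · simp only [if_neg h]; exact P.hlow j
  · intro j hj; by_cases h : j = k
    · subst h; simp only [if_pos rfl]
      intro z hz
      rcases hz with hz | hz
      · exact (hkey z (subset_closure hz) (hU₀W hz)).1
      · exact L.hmono j (j + 1) (by omega) hz
    · simp only [if_neg h]; exact P.hup j (by omega)
  · intro j; by_cases h : j = k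
    · subst h; simp only [if_pos rfl]
      intro z hz
      exact Or.inl (hAU₀ ⟨⟨hz.1, hW'pre hz.2⟩, hz.2⟩)
    · simp only [if_neg h]
      exact fun z hz => P.hclA j ⟨hz.1, hW'pre hz.2⟩
  · intro j hj; by_cases h : j = k
    · subst h; simp only [if_pos rfl]
      intro z hz
      have hzcl : z ∈ closure U₀ ∪ closure (L.u j) := by
        rw [← closure_union]; exact hz.1
      rcases hzcl with hzc | hzc
      · exact (hkey z hzc hz.2).1
      · exact L.hH j (j + 1) (by omega) ⟨hzc, hPWpre (hW'pre hz.2)⟩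
    · simp only [if_neg h]
      exact fun z hz => P.hclB j (by omega) ⟨hz.1, hW'pre hz.2⟩
  · intro j hj; by_cases h : j = k
    · subst h; simp only [if_pos rfl]
      apply Set.eq_empty_of_subset_empty
      rintro z ⟨⟨hzcl, hzT⟩, hzW⟩
      have hzcl' : z ∈ closure U₀ ∪ closure (L.u j) := by
        rw [← closure_union]; exact hzcl
      rcases hzcl' with hzc | hzc
      · exact (hkey z hzc hzW).2 hzT
      · have : z ∈ closure (L.u j) ∩ T ∩ f ⁻¹' L.W := ⟨⟨hzc, hzT⟩, hPWpre (hW'pre hzW)⟩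
        rw [L.hTcl j hk] at this; exact this
    · simp only [if_neg h]
      apply Set.eq_empty_of_subset_empty
      rintro z ⟨⟨hzcl, hzT⟩, hzW⟩
      have : z ∈ closure (P.v j) ∩ T ∩ f ⁻¹' P.W := ⟨⟨hzcl, hzT⟩, hW'pre hzW⟩
      rw [P.hclT j (by omega)] at this; exact this
  · intro j hj; by_cases h : j = k
    · subst h; simp only [if_pos rfl]
      apply Set.eq_empty_of_subset_empty
      rintro z ⟨hz, hzT⟩
      rcases hz with hz | hz
      · exact (hkey z (subset_closure hz) (hU₀W hz)).2 hzT
      · have : z ∈ L.u j ∩ T := ⟨hz, hzT⟩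
        rw [L.hT j hk] at this; exact this
    · simp only [if_neg h]
      apply Set.eq_empty_of_subset_empty
      rintro z ⟨hz, hzT⟩
      have : z ∈ P.v j ∩ T := ⟨hz, hzT⟩
      rw [P.hvT j (by omega)] at this; exact this

end UrysohnProof

end UrysohnConstr
section UrysohnLevelStep
set_option linter.unusedSectionVars false
set_option maxHeartbeats 1000000

namespace UrysohnProof

variable {X Y : Type*} [TopologicalSpace X] [TopologicalSpace Y]

lemma UPartial.exists {f : X → Y} (hf : Continuous f) (hn : NormalMap f) {T : Set X}
    {O : Set Y} {y : Y} {n : ℕ} (L : ULevel f T O y n) (hTc : ClosedIn (f ⁻¹' O) T) :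
    ∀ k, k ≤ 2 ^ n → Nonempty (UPartial L k) := by
  intro k
  induction k with
  | zero => exact fun _ => UPartial.init L
  | succ k ih =>
    intro hk
    obtain ⟨P⟩ := ih (by omega)
    exact UPartial.step hf hn hTc (by omega) P

lemma ULevel.stepEx {f : X → Y} (hf : Continuous f) (hn : NormalMap f) {T : Set X}
    {O : Set Y} {y : Y} {n : ℕ} (hTc : ClosedIn (f ⁻¹' O) T) (L : ULevel f T O y n) :
    ∃ L' : ULevel f T O y (n + 1), L'.W ⊆ L.W ∧ ∀ k, L'.u (2 * k) = L.u k := by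
  obtain ⟨P⟩ := UPartial.exists hf hn L hTc (2 ^ n) le_rfl
  have h2 : 2 ^ (n + 1) = 2 * 2 ^ n := by ring
  have hPWpre : f ⁻¹' P.W ⊆ f ⁻¹' L.W := fun z hz => P.hWsub hz
  -- helper facts
  have hvu : ∀ a b, a < b → P.v a ⊆ L.u b := by
    intro a b hab
    by_cases ha : a < 2 ^ n
    · exact (P.hup a ha).trans (L.hmono (a + 1) b hab)
    · rw [P.hvTop a (by omega), L.hTop b (by omega)]
  have hclvu : ∀ a b, a < b → closure (P.v a) ∩ f ⁻¹' P.W ⊆ L.u b := by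
    intro a b hab
    by_cases ha : a < 2 ^ n
    · exact (P.hclB a ha).trans (L.hmono (a + 1) b hab)
    · rw [P.hvTop a (by omega), L.hTop b (by omega)]; exact fun z _ => trivial
  have hcluu : ∀ a b, a < b → closure (L.u a) ∩ f ⁻¹' P.W ⊆ L.u b := by
    intro a b hab z hz
    exact L.hH a b hab ⟨hz.1, hPWpre hz.2⟩
  refine ⟨⟨P.W, fun j => if j % 2 = 0 then L.u (j / 2) else P.v (j / 2),
    P.hWopen, P.hyW, P.hWsub.trans L.hWO, ?_, ?_, ?_, ?_, ?_, ?_⟩, P.hWsub, ?_⟩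
  · intro j; by_cases h : j % 2 = 0 <;> simp [h, L.huopen, P.hvopen]
  · intro j hj; rw [h2] at hj
    by_cases h : j % 2 = 0
    · rw [if_pos h]; exact L.hTop (j / 2) (by omega)
    · rw [if_neg h]; exact P.hvTop (j / 2) (by omega)
  · intro j j' hjj'
    by_cases h : j % 2 = 0 <;> by_cases h' : j' % 2 = 0
    · rw [if_pos h, if_pos h']; exact L.hmono _ _ (by omega)
    · rw [if_pos h, if_neg h']
      exact (L.hmono (j / 2) (j' / 2) (by omega)).trans (P.hlow _)
    · rw [if_neg h, if_pos h']; exact hvu _ _ (by omega)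
    · rw [if_neg h, if_neg h']
      rcases eq_or_lt_of_le (show j / 2 ≤ j' / 2 by omega) with hab | hab
      · rw [hab]
      · exact (hvu _ _ hab).trans (P.hlow _)
  · intro j j' hjj'
    by_cases h : j % 2 = 0 <;> by_cases h' : j' % 2 = 0
    · rw [if_pos h, if_pos h']; exact hcluu _ _ (by omega)
    · rw [if_pos h, if_neg h']
      rcases eq_or_lt_of_le (show j / 2 ≤ j' / 2 by omega) with hab | hab
      · rw [hab]; exact P.hclA _
      · exact (hcluu _ _ hab).trans (P.hlow _)
    · rw [if_neg h, if_pos h']; exact hclvu _ _ (by omega)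
    · rw [if_neg h, if_neg h']; exact (hclvu _ _ (by omega)).trans (P.hlow _)
  · intro j hj; rw [h2] at hj
    by_cases h : j % 2 = 0
    · rw [if_pos h]; exact L.hT (j / 2) (by omega)
    · rw [if_neg h]; exact P.hvT (j / 2) (by omega)
  · intro j hj; rw [h2] at hj
    by_cases h : j % 2 = 0
    · rw [if_pos h]
      apply Set.eq_empty_of_subset_empty
      rintro z ⟨⟨hzcl, hzT⟩, hzW⟩
      have : z ∈ closure (L.u (j / 2)) ∩ T ∩ f ⁻¹' L.W := ⟨⟨hzcl, hzT⟩, hPWpre hzW⟩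
      rw [L.hTcl (j / 2) (by omega)] at this; exact this
    · rw [if_neg h]; exact P.hclT (j / 2) (by omega)
  · intro k
    have h0 : (2 * k) % 2 = 0 := by omega
    have h1 : 2 * k / 2 = k := by omega
    show (if (2 * k) % 2 = 0 then L.u (2 * k / 2) else P.v (2 * k / 2)) = L.u k
    rw [if_pos h0, h1]

end UrysohnProof

end UrysohnLevelStep
section UrysohnForward
set_option linter.unusedSectionVars false
set_option maxHeartbeats 1000000

namespace UrysohnProof

variable {X Y : Type*} [TopologicalSpace X] [TopologicalSpace Y]

lemma urysohn_forward {f : X → Y} (hf : Continuous f) (hn : NormalMap f) {O : Set Y}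
    (hO : IsOpen O) {F T : Set X} (hFc : ClosedIn (f ⁻¹' O) F) (hTc : ClosedIn (f ⁻¹' O) T)
    (hFT : F ∩ T = ∅) {y : Y} (hy : y ∈ O) :
    ∃ (φ : X → ℝ) (Oy : Set Y),
      (∀ x, φ x ∈ Set.Icc (0 : ℝ) 1) ∧ FContinuousAt f φ y ∧
      IsOpen Oy ∧ y ∈ Oy ∧ oscOn φ (f ⁻¹' Oy) < 1 / 2 ∧
      F ∩ f ⁻¹' Oy ⊆ φ ⁻¹' {0} ∩ f ⁻¹' Oy ∧
      T ∩ f ⁻¹' Oy ⊆ φ ⁻¹' {1} ∩ f ⁻¹' Oy ∧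
      F ∩ f ⁻¹' Oy ⊆ f ⁻¹' Oy \ clIn (f ⁻¹' Oy) (φ ⁻¹' Set.Icc (1 / 2 : ℝ) 1 ∩ f ⁻¹' Oy) ∧
      T ∩ f ⁻¹' Oy ⊆ intIn (f ⁻¹' Oy) (φ ⁻¹' Set.Icc (1 / 2 : ℝ) 1 ∩ f ⁻¹' Oy) := by
  classical
  obtain ⟨L0, hL0⟩ := ULevel.init hf hn hO hFc hTc hFT hy
  choose stepF hstepW hstepU using fun n (L : ULevel f T O y n) => ULevel.stepEx hf hn hTc L
  set S : ∀ n, ULevel f T O y n :=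
    fun n => Nat.rec (motive := fun n => ULevel f T O y n) L0 stepF n with hSdef
  have hS0 : S 0 = L0 := rfl
  have hSW : ∀ n, (S (n + 1)).W ⊆ (S n).W := fun n => hstepW n (S n)
  have hSU : ∀ n k, (S (n + 1)).u (2 * k) = (S n).u k := fun n k => hstepU n (S n) k
  have hWmono : ∀ n m, n ≤ m → (S m).W ⊆ (S n).W := by
    intro n m hnm
    induction m with
    | zero => have : n = 0 := by omega
              subst this; exact subset_rfl
    | succ m ih =>
      rcases Nat.lt_or_ge n (m + 1) with h | h
      · exact (hSW m).trans (ih (by omega))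
      · have : n = m + 1 := by omega
        subst this; exact subset_rfl
  have hcons : ∀ n d k, (S (n + d)).u (2 ^ d * k) = (S n).u k := by
    intro n d
    induction d with
    | zero => intro k; simp
    | succ d ih =>
      intro k
      have h1 : 2 ^ (d + 1) * k = 2 * (2 ^ d * k) := by ring
      have h2 : n + (d + 1) = (n + d) + 1 := by omega
      rw [h1, h2, hSU (n + d) (2 ^ d * k), ih k]
  have hupward : ∀ (x : X) (n j m k : ℕ), x ∈ (S n).u j → j * 2 ^ m ≤ k * 2 ^ n →
      x ∈ (S m).u k := by
    intro x n j m k hx hjk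
    set M := max n m with hM
    have e1 : (2 : ℕ) ^ (M - n) * 2 ^ n = 2 ^ M := by
      rw [← pow_add]; congr 1; omega
    have e2 : (2 : ℕ) ^ (M - m) * 2 ^ m = 2 ^ M := by
      rw [← pow_add]; congr 1; omega
    have key : (2 ^ (M - n) * j) * (2 ^ n * 2 ^ m) ≤ (2 ^ (M - m) * k) * (2 ^ n * 2 ^ m) := by
      calc (2 ^ (M - n) * j) * (2 ^ n * 2 ^ m) = 2 ^ M * (j * 2 ^ m) := by rw [← e1]; ring
      _ ≤ 2 ^ M * (k * 2 ^ n) := Nat.mul_le_mul_left _ hjk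
      _ = (2 ^ (M - m) * k) * (2 ^ n * 2 ^ m) := by rw [← e2]; ring
    have hle2 : 2 ^ (M - n) * j ≤ 2 ^ (M - m) * k :=
      Nat.le_of_mul_le_mul_right key (by positivity)
    have hx1 : x ∈ (S M).u (2 ^ (M - n) * j) := by
      have h := hcons n (M - n) j
      have hMn : n + (M - n) = M := by omega
      rw [hMn] at h
      rw [h]; exact hx
    have hx2 : x ∈ (S M).u (2 ^ (M - m) * k) := (S M).hmono _ _ hle2 hx1
    have h := hcons m (M - m) k
    have hMm : m + (M - m) = M := by omega
    rw [hMm] at h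
    rw [← h]; exact hx2
  -- the Urysohn function
  set Q : X → Set ℝ := fun x => insert (1 : ℝ)
    {r | ∃ n k : ℕ, k < 2 ^ n ∧ x ∈ (S n).u k ∧ r = (k : ℝ) / 2 ^ n} with hQdef
  set φ : X → ℝ := fun x => sInf (Q x) with hφdef
  have hQne : ∀ x, (Q x).Nonempty := fun x => ⟨1, Set.mem_insert _ _⟩
  have hQpos : ∀ x, ∀ r ∈ Q x, (0 : ℝ) ≤ r := by
    intro x r hr
    rcases Set.mem_insert_iff.mp hr with h | ⟨n, k, hk, hx, rfl⟩
    · rw [h]; norm_num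
    · positivity
  have hQbdd : ∀ x, BddBelow (Q x) := fun x => ⟨0, fun r hr => hQpos x r hr⟩
  have hb : ∀ x, φ x ∈ Set.Icc (0 : ℝ) 1 := by
    intro x
    exact ⟨le_csInf (hQne x) (hQpos x), csInf_le (hQbdd x) (Set.mem_insert _ _)⟩
  have hle : ∀ (x : X) (n k : ℕ), k < 2 ^ n → x ∈ (S n).u k → φ x ≤ (k : ℝ) / 2 ^ n :=
    fun x n k hk hx => csInf_le (hQbdd x) (Set.mem_insert_iff.mpr (Or.inr ⟨n, k, hk, hx, rfl⟩))
  have hge : ∀ (x : X) (n k : ℕ), k < 2 ^ n → x ∉ (S n).u k → (k : ℝ) / 2 ^ n ≤ φ x := by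
    intro x n k hk hx
    apply le_csInf (hQne x)
    intro r hr
    rcases Set.mem_insert_iff.mp hr with h | ⟨m, j, hj, hxj, rfl⟩
    · rw [h]
      rw [div_le_one (by positivity)]
      exact_mod_cast Nat.le_of_lt hk
    · by_contra hlt
      push_neg at hlt
      have h1 : (j : ℝ) * 2 ^ n < (k : ℝ) * 2 ^ m := by
        rw [div_lt_div_iff₀ (by positivity) (by positivity)] at hlt
        exact hlt
      have h2 : j * 2 ^ n ≤ k * 2 ^ m := by
        have : (j * 2 ^ n : ℕ) < (k * 2 ^ m : ℕ) := by exact_mod_cast (by push_cast; exact h1 :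
          ((j * 2 ^ n : ℕ) : ℝ) < ((k * 2 ^ m : ℕ) : ℝ))
        omega
      exact hx (hupward x m j n k hxj h2)
  -- oscillation estimate at level n
  have hosc : ∀ n : ℕ, 1 ≤ n → ∀ x ∈ f ⁻¹' (S n).W, ∃ G, IsOpen G ∧ x ∈ G ∧
      ∀ z ∈ G, |φ x - φ z| ≤ 2 / 2 ^ n := by
    intro n hn1 x hx
    have hpos : (0 : ℝ) < 2 ^ n := by positivity
    set Kset : Set ℕ := {k | x ∈ (S n).u k ∨ k = 2 ^ n} with hKsetdef
    have hKne : Kset.Nonempty := ⟨2 ^ n, Or.inr rfl⟩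
    set K := sInf Kset with hKdef
    have hKmem : K ∈ Kset := Nat.sInf_mem hKne
    have hKle : K ≤ 2 ^ n := Nat.sInf_le (Or.inr rfl)
    have hxK : x ∈ (S n).u K := by
      rcases hKmem with h | h
      · exact h
      · rw [h, (S n).hTop (2 ^ n) le_rfl]; trivial
    have hmin : ∀ j, j < K → x ∉ (S n).u j := by
      intro j hj hxj
      exact Nat.notMem_of_lt_sInf hj (Or.inl hxj)
    have hub : ∀ z, z ∈ (S n).u K → φ z ≤ (K : ℝ) / 2 ^ n := by
      intro z hz
      rcases lt_or_eq_of_le hKle with h | h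
      · exact hle z n K h hz
      · rw [h]
        have hone : ((2 ^ n : ℕ) : ℝ) / 2 ^ n = 1 := by
          push_cast
          rw [div_self (ne_of_gt hpos)]
        rw [hone]
        exact (hb z).2
    by_cases h2 : 2 ≤ K
    · refine ⟨(S n).u K ∩ f ⁻¹' (S n).W ∩ (closure ((S n).u (K - 2)))ᶜ, ?_, ?_, ?_⟩
      · exact (((S n).huopen K).inter ((S n).hWopen.preimage hf)).inter
          isClosed_closure.isOpen_compl
      · refine ⟨⟨hxK, hx⟩, fun hcl => ?_⟩
        exact hmin (K - 1) (by omega) ((S n).hH (K - 2) (K - 1) (by omega) ⟨hcl, hx⟩)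
      · rintro z ⟨⟨hz1, hz2⟩, hz3⟩
        have hK2 : K - 2 < 2 ^ n := by omega
        have hcast : ((K - 2 : ℕ) : ℝ) = (K : ℝ) - 2 := by
          push_cast [Nat.cast_sub h2]; ring
        have hzlb : (K : ℝ) / 2 ^ n - 2 / 2 ^ n ≤ φ z := by
          have := hge z n (K - 2) hK2 (fun hmem => hz3 (subset_closure hmem))
          rw [hcast] at this
          calc (K : ℝ) / 2 ^ n - 2 / 2 ^ n = ((K : ℝ) - 2) / 2 ^ n := by ring
          _ ≤ φ z := this
        have hzub : φ z ≤ (K : ℝ) / 2 ^ n := hub z hz1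
        have hxlb : (K : ℝ) / 2 ^ n - 2 / 2 ^ n ≤ φ x := by
          have hK1 : K - 1 < 2 ^ n := by omega
          have := hge x n (K - 1) hK1 (hmin (K - 1) (by omega))
          have hcast1 : ((K - 1 : ℕ) : ℝ) = (K : ℝ) - 1 := by
            push_cast [Nat.cast_sub (by omega : 1 ≤ K)]; ring
          rw [hcast1] at this
          calc (K : ℝ) / 2 ^ n - 2 / 2 ^ n = ((K : ℝ) - 2) / 2 ^ n := by ring
          _ ≤ ((K : ℝ) - 1) / 2 ^ n := by gcongr <;> linarith
          _ ≤ φ x := this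
        have hxub : φ x ≤ (K : ℝ) / 2 ^ n := hub x hxK
        rw [abs_sub_le_iff]
        constructor <;> linarith
    · refine ⟨(S n).u K ∩ f ⁻¹' (S n).W, ((S n).huopen K).inter ((S n).hWopen.preimage hf),
        ⟨hxK, hx⟩, ?_⟩
      rintro z ⟨hz1, hz2⟩
      have hKub : (K : ℝ) / 2 ^ n ≤ 2 / 2 ^ n := by
        gcongr
        exact_mod_cast (by omega : K ≤ 2)
      have h1 := hub z hz1
      have h2 := hub x hxK
      have h3 := (hb z).1
      have h4 := (hb x).1
      rw [abs_sub_le_iff]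
      constructor <;> linarith
  -- oscillation on preimages of the neighborhoods
  have hoscOn : ∀ n : ℕ, 1 ≤ n → oscOn φ (f ⁻¹' (S n).W) ≤ 2 / 2 ^ n := by
    intro n hn1
    exact oscOn_le hb _ (by positivity) (hosc n hn1)
  have hfc : FContinuousAt f φ y := by
    intro ε hε
    obtain ⟨n, hn2⟩ := exists_nat_gt (2 / ε)
    set m := max n 1 with hm
    refine ⟨(S m).W, (S m).hWopen, (S m).hyW, lt_of_le_of_lt (hoscOn m (le_max_right n 1)) ?_⟩
    have hnm : (2 : ℝ) ^ n ≤ 2 ^ m := by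
      apply pow_le_pow_right₀ (by norm_num) (le_max_left n 1)
    have hn3 : (n : ℝ) ≤ 2 ^ n := by
      have := Nat.lt_two_pow_self (n := n)
      have h := (Nat.cast_lt (α := ℝ)).mpr this
      push_cast at h
      linarith
    have h2ε : 2 / ε < 2 ^ m := by linarith
    rw [div_lt_iff₀ hε] at h2ε
    rw [div_lt_iff₀ (by positivity : (0:ℝ) < 2 ^ m)]
    linarith
  -- final neighborhood
  refine ⟨φ, (S 3).W, hb, hfc, (S 3).hWopen, (S 3).hyW, ?_, ?_, ?_, ?_, ?_⟩
  · refine lt_of_le_of_lt (hoscOn 3 (by norm_num)) (by norm_num)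
  · -- F condition
    rintro x ⟨hxF, hxOy⟩
    have hx0 : x ∈ (S 0).u 0 := hL0 ⟨hxF, hWmono 0 3 (by omega) hxOy⟩
    have hφ0 : φ x = 0 := by
      refine le_antisymm ?_ (hb x).1
      have := hle x 0 0 (by norm_num) hx0
      simpa using this
    exact ⟨hφ0, hxOy⟩
  · -- T condition
    rintro x ⟨hxT, hxOy⟩
    have hempty : {r : ℝ | ∃ n k : ℕ, k < 2 ^ n ∧ x ∈ (S n).u k ∧ r = (k : ℝ) / 2 ^ n} = ∅ := by
      apply Set.eq_empty_of_subset_empty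
      rintro r ⟨n, k, hk, hx, rfl⟩
      have : x ∈ (S n).u k ∩ T := ⟨hx, hxT⟩
      rw [(S n).hT k hk] at this; exact this.elim
    have hφ1 : φ x = 1 := by
      show sInf (Q x) = 1
      have hQx : Q x = {1} := by
        rw [hQdef]
        dsimp only
        rw [hempty]
        simp
      rw [hQx]
      exact csInf_singleton 1
    exact ⟨hφ1, hxOy⟩
  · -- F avoids the closure of the upper half
    rintro x ⟨hxF, hxOy⟩
    have hx0 : x ∈ (S 0).u 0 := hL0 ⟨hxF, hWmono 0 3 (by omega) hxOy⟩
    refine ⟨hxOy, fun hclmem => ?_⟩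
    have hcl : x ∈ closure (φ ⁻¹' Set.Icc (1 / 2 : ℝ) 1 ∩ f ⁻¹' (S 3).W) := hclmem.1
    rw [_root_.mem_closure_iff] at hcl
    obtain ⟨z, hzu, hzIcc, hzW⟩ := hcl ((S 0).u 0) ((S 0).huopen 0) hx0
    have hφz : φ z = 0 := by
      refine le_antisymm ?_ (hb z).1
      have := hle z 0 0 (by norm_num) hzu
      simpa using this
    rw [Set.mem_preimage, hφz] at hzIcc
    have := hzIcc.1
    norm_num at this
  · -- T is in the interior of the upper half
    rintro x ⟨hxT, hxOy⟩
    have hnotcl : x ∉ closure ((S 3).u 4) := by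
      intro hcl
      have hxW3 : x ∈ f ⁻¹' (S 3).W := hxOy
      have : x ∈ closure ((S 3).u 4) ∩ T ∩ f ⁻¹' (S 3).W := ⟨⟨hcl, hxT⟩, hxW3⟩
      rw [(S 3).hTcl 4 (by norm_num)] at this; exact this
    refine ⟨(closure ((S 3).u 4))ᶜ ∩ f ⁻¹' (S 3).W,
      ⟨⟨(closure ((S 3).u 4))ᶜ, isClosed_closure.isOpen_compl, rfl⟩, ?_⟩, hnotcl, hxOy⟩
    rintro z ⟨hz1, hz2⟩
    have hznot : z ∉ (S 3).u 4 := fun hmem => hz1 (subset_closure hmem)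
    have hzge := hge z 3 4 (by norm_num) hznot
    refine ⟨⟨?_, (hb z).2⟩, hz2⟩
    calc (1 / 2 : ℝ) = (4 : ℝ) / 2 ^ 3 := by norm_num
    _ ≤ φ z := hzge


end UrysohnProof

end UrysohnForward
/-- Theorem 3.4, (A) ⇔ (C); Urysohn's Lemma for mappings: `f` is normal iff
disjoint closed (in `f⁻¹ O`) sets `F`, `T` are separated by an `f`-continuous at `y` function
`φ : X → [0,1]` as stated. -/
theorem normalMap_iff_urysohn {X Y : Type*} [TopologicalSpace X] [TopologicalSpace Y]
    (f : X → Y) (hf : Continuous f) :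
    NormalMap f ↔
      ∀ O : Set Y, IsOpen O → ∀ F T : Set X,
        ClosedIn (f ⁻¹' O) F → ClosedIn (f ⁻¹' O) T → F ∩ T = ∅ →
        ∀ y ∈ O, ∃ (φ : X → ℝ) (Oy : Set Y),
          (∀ x, φ x ∈ Set.Icc (0 : ℝ) 1) ∧ FContinuousAt f φ y ∧
          IsOpen Oy ∧ y ∈ Oy ∧ oscOn φ (f ⁻¹' Oy) < 1 / 2 ∧
          F ∩ f ⁻¹' Oy ⊆ φ ⁻¹' {0} ∩ f ⁻¹' Oy ∧
          T ∩ f ⁻¹' Oy ⊆ φ ⁻¹' {1} ∩ f ⁻¹' Oy ∧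
          F ∩ f ⁻¹' Oy ⊆ f ⁻¹' Oy \ clIn (f ⁻¹' Oy) (φ ⁻¹' Set.Icc (1 / 2 : ℝ) 1 ∩ f ⁻¹' Oy) ∧
          T ∩ f ⁻¹' Oy ⊆ intIn (f ⁻¹' Oy) (φ ⁻¹' Set.Icc (1 / 2 : ℝ) 1 ∩ f ⁻¹' Oy) := by
  constructor
  · intro hn O hO F T hFc hTc hFT y hy
    exact UrysohnProof.urysohn_forward hf hn hO hFc hTc hFT hy
  · intro h O hO A B hA hB hAB y hy
    obtain ⟨φ, Oy, hb, hfc, hOyo, hyOy, hosc, hF0, hT1, -, -⟩ := h O hO A B hA hB hAB y hy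
    refine ⟨Oy ∩ O, hOyo.inter hO, ⟨hyOy, hy⟩, Set.inter_subset_right, ?_⟩
    have hWOy : f ⁻¹' (Oy ∩ O) ⊆ f ⁻¹' Oy := fun z hz => hz.1
    have hosc_pt : ∀ x ∈ f ⁻¹' Oy, oscWithin Set.univ φ x < 1 / 2 :=
      fun x hx => lt_of_le_of_lt (UrysohnProof.osc_le_oscOn hb hx) hosc
    refine ⟨(⋃₀ {G | IsOpen G ∧ ∀ z ∈ G, φ z < 1 / 2}) ∩ f ⁻¹' (Oy ∩ O),
      (⋃₀ {G | IsOpen G ∧ ∀ z ∈ G, 1 / 2 < φ z}) ∩ f ⁻¹' (Oy ∩ O),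
      ⟨_, isOpen_sUnion (fun G hG => hG.1), rfl⟩,
      ⟨_, isOpen_sUnion (fun G hG => hG.1), rfl⟩, ?_, ?_, ?_⟩
    · rintro x ⟨hxA, hxW⟩
      have hxOy : x ∈ f ⁻¹' Oy := hxW.1
      have hφx : φ x = 0 := (hF0 ⟨hxA, hxOy⟩).1
      obtain ⟨G, hGo, hxG, hGlt⟩ := UrysohnProof.exists_nhd_of_osc_lt hb (hosc_pt x hxOy)
      refine ⟨Set.mem_sUnion.mpr ⟨G, ⟨hGo, fun z hz => ?_⟩, hxG⟩, hxW⟩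
      have h1 := hGlt z hz
      rw [hφx, zero_sub, abs_neg] at h1
      calc φ z ≤ |φ z| := le_abs_self _
      _ < 1 / 2 := h1
    · rintro x ⟨hxB, hxW⟩
      have hxOy : x ∈ f ⁻¹' Oy := hxW.1
      have hφx : φ x = 1 := (hT1 ⟨hxB, hxOy⟩).1
      obtain ⟨G, hGo, hxG, hGlt⟩ := UrysohnProof.exists_nhd_of_osc_lt hb (hosc_pt x hxOy)
      refine ⟨Set.mem_sUnion.mpr ⟨G, ⟨hGo, fun z hz => ?_⟩, hxG⟩, hxW⟩
      have h1 := hGlt z hz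
      rw [hφx] at h1
      have h2 : 1 - φ z ≤ |1 - φ z| := le_abs_self _
      linarith
    · apply Set.eq_empty_of_subset_empty
      rintro z ⟨⟨hzU, -⟩, ⟨hzV, -⟩⟩
      obtain ⟨G1, ⟨-, h1⟩, hz1⟩ := hzU
      obtain ⟨G2, ⟨-, h2⟩, hz2⟩ := hzV
      exact absurd (h1 z hz1) (not_lt.mpr (le_of_lt (h2 z hz2)))
end
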